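/- arXiv:1705.00588 — 5 statements merged into one kernel-verified Lean document; each statement's English description precedes it below -/
import Mathlib

section
/- Let M be a free N-pseudospace, A a closed subset of M and x ∈ M \ A. Then A ∪ {x} is closed if and only if there is no direct path from x to A of length at least 2. -/
/-- A *zigzag* of length `n`: consecutive terms are strictly comparable and every
interior term is either the infimum (a sink) or the supremum (a peak) of its two
neighbours. -/
def IsZigzag {V : Type*} [Lattice V] (x : ℕ → V) (n : ℕ) : Prop :=
  (∀ i < n, x i < x (i + 1) ∨ x (i + 1) < x i) ∧
  ∀ i, i + 2 ≤ n →
    (x (i + 1) < x i ∧ x (i + 1) < x (i + 2) ∧ x (i + 1) = x i ⊓ x (i + 2)) ∨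
    (x i < x (i + 1) ∧ x (i + 2) < x (i + 1) ∧ x (i + 1) = x i ⊔ x (i + 2))

/-- A *zigzag cycle* of length `2 * n`: a `2 * n`-periodic sequence satisfying the
zigzag condition at every index (i.e. indices modulo `2 * n`). -/
def IsZigzagCycle {V : Type*} [Lattice V] (x : ℕ → V) (n : ℕ) : Prop :=
  0 < n ∧ (∀ i, x (i + 2 * n) = x i) ∧
  ∀ i,
    (x (i + 1) < x i ∧ x (i + 1) < x (i + 2) ∧ x (i + 1) = x i ⊓ x (i + 2)) ∨
    (x i < x (i + 1) ∧ x (i + 2) < x (i + 1) ∧ x (i + 1) = x i ⊔ x (i + 2))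

/-- A lattice is *simply connected* if it contains no zigzag cycles. -/
def SimplyConnected (V : Type*) [Lattice V] : Prop :=
  ∀ (x : ℕ → V) (n : ℕ), ¬IsZigzagCycle x n

/-- A *free N-pseudospace* structure on a bounded lattice `M`: an `N`-geometry
(layers indexed by `-1, …, N+1` via the function `layer`, strictly monotone,
with `⊥` in layer `-1` and `⊤` in layer `N+1`) which is simply connected and such
that for all `a < b` and every layer index `s` strictly between the layers of `a`
and `b` there are infinitely many `x` in layer `s` with `a < x < b`. -/
structure FreePseudospace (N : ℕ) (M : Type*) [Lattice M] [BoundedOrder M] where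
  layer : M → ℤ
  layer_bot : layer ⊥ = -1
  layer_top : layer ⊤ = (N : ℤ) + 1
  layer_bounds : ∀ v : M, -1 ≤ layer v ∧ layer v ≤ (N : ℤ) + 1
  layer_strictMono : ∀ v w : M, v < w → layer v < layer w
  simplyConnected : SimplyConnected M
  dense_layers : ∀ a b : M, a < b → ∀ s : ℤ, layer a < s → s < layer b →
    {x : M | a < x ∧ x < b ∧ layer x = s}.Infinite

/-- A subset `A` is *closed* if it contains `⊥` and `⊤` and every zigzag whose two
endpoints lie in `A` lies entirely in `A`. -/
def ZClosed {M : Type*} [Lattice M] [BoundedOrder M] (A : Set M) : Prop :=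
  ⊥ ∈ A ∧ ⊤ ∈ A ∧
  ∀ (x : ℕ → M) (n : ℕ), IsZigzag x n → x 0 ∈ A → x n ∈ A → ∀ i ≤ n, x i ∈ A

/-- A *direct path* from `x 0` to `A`: a zigzag `x 0, …, x n` with `x i ∉ A` for
`i < n`, `x n ∈ A`, and no element of `A` strictly between `x (n-1)` and `x n`. -/
def IsDirectPath {M : Type*} [Lattice M] (x : ℕ → M) (n : ℕ) (A : Set M) : Prop :=
  IsZigzag x n ∧ (∀ i < n, x i ∉ A) ∧ x n ∈ A ∧
  ∀ y ∈ A, ¬((x (n - 1) < y ∧ y < x n) ∨ (x n < y ∧ y < x (n - 1)))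

section Helpers
variable {M : Type*} [Lattice M]

lemma zig_alt {z : ℕ → M} {n : ℕ} (hz : IsZigzag z n) (h0 : z 0 < z 1) :
    ∀ i < n, (Even i → z i < z (i + 1)) ∧ (¬ Even i → z (i + 1) < z i) := by
  intro i
  induction i with
  | zero => exact fun _ => ⟨fun _ => h0, fun h => absurd Even.zero h⟩
  | succ i ih =>
    intro hi
    obtain ⟨he, ho⟩ := ih (by omega)
    have hcond := hz.2 i (by omega)
    constructor
    · intro hev
      have hodd : ¬ Even i := by rw [Nat.even_add_one] at hev; exact hev
      have hlt := ho hodd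
      rcases hcond with ⟨_, hb, _⟩ | ⟨ha, _, _⟩
      · exact hb
      · exact absurd ha (lt_asymm hlt)
    · intro hodd
      have hev : Even i := by rw [Nat.even_add_one, not_not] at hodd; exact hodd
      have hlt := he hev
      rcases hcond with ⟨ha, _, _⟩ | ⟨_, hb, _⟩
      · exact absurd ha (lt_asymm hlt)
      · exact hb

lemma zig_mono {z : ℕ → M} {n m : ℕ} (hz : IsZigzag z n) (hmn : m ≤ n) : IsZigzag z m :=
  ⟨fun i hi => hz.1 i (lt_of_lt_of_le hi hmn), fun i hi => hz.2 i (le_trans hi hmn)⟩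

lemma zig_seg {z : ℕ → M} {n : ℕ} (hz : IsZigzag z n) (a m : ℕ) (h : a + m ≤ n) :
    IsZigzag (fun i => z (a + i)) m :=
  ⟨fun i hi => hz.1 (a + i) (by omega), fun i hi => hz.2 (a + i) (by omega)⟩

end Helpers

lemma exists_fix {N : ℕ} {M : Type*} [Lattice M] [BoundedOrder M] (P : FreePseudospace N M)
    (f : M → M) (s0 : M) (hgrow : ∀ k, f^[k] s0 ≤ f^[k + 1] s0) :
    ∃ k, f^[k + 1] s0 = f^[k] s0 := by
  by_contra h
  push_neg at h
  have grow : ∀ k : ℕ, P.layer s0 + k ≤ P.layer (f^[k] s0) := by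
    intro k
    induction k with
    | zero => simp
    | succ k ih =>
      have hlt : f^[k] s0 < f^[k + 1] s0 := lt_of_le_of_ne (hgrow k) (Ne.symm (h k))
      have := P.layer_strictMono _ _ hlt
      push_cast
      omega
  have h1 := (P.layer_bounds (f^[N + 3] s0)).2
  have h2 := (P.layer_bounds s0).1
  have h3 := grow (N + 3)
  push_cast at h3
  omega

lemma L7 {N : ℕ} {M : Type*} [Lattice M] [BoundedOrder M] (P : FreePseudospace N M)
    (e : ℕ) (he : 1 ≤ e) (z : ℕ → M) (hz : IsZigzag z (e + 2))
    (hU : z 0 < z 1) (hu : z (e + 1) < z (e + 2)) (hle : z 0 ≤ z (e + 2))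
    (IH : ∀ m, m < e + 2 → 2 ≤ m → ∀ w : ℕ → M, IsZigzag w m →
      (w 0 ≤ w m ∨ w m ≤ w 0) → False) :
    False := by
  -- conditions at ends
  have hc0 := hz.2 0 (by omega)
  rcases hc0 with ⟨ha0, _, _⟩ | ⟨_, h21, h1eq⟩
  · exact absurd ha0 (lt_asymm hU)
  have hce := hz.2 e (by omega)
  rcases hce with ⟨hse1, hse2, heq⟩ | ⟨_, hbad, _⟩
  swap
  · exact absurd hbad (lt_asymm hu)
  -- parity
  have halt := zig_alt hz hU
  have heven : Even (e + 1) := by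
    by_contra hcon
    exact absurd ((halt (e + 1) (by omega)).2 hcon) (lt_asymm hu)
  obtain ⟨m0, hm0⟩ := heven
  -- case n = 3
  by_cases he1 : e = 1
  · subst he1
    have h02 : z 0 ≤ z (1 + 1) := by rw [heq]; exact le_inf hU.le hle
    have : z 1 = z (1 + 1) := by
      have h1eq' : z 1 = z 0 ⊔ z (0 + 2) := h1eq
      rw [h1eq']
      exact sup_eq_right.mpr h02
    exact h21.ne' this
  have he3 : 3 ≤ e := by omega
  -- fixed point
  set f : M → M := fun s => (z (e + 1) ⊔ s) ⊓ z 1 with hfdef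
  have hinv : ∀ k, z 0 ≤ f^[k] (z 0) ∧ f^[k] (z 0) ≤ z 1 ∧ f^[k] (z 0) ≤ z (e + 2) := by
    intro k
    induction k with
    | zero => simpa using ⟨hU.le, hle⟩
    | succ k ih =>
      obtain ⟨i1, i2, i3⟩ := ih
      rw [Function.iterate_succ_apply']
      refine ⟨i1.trans (le_inf (le_sup_right.trans le_rfl) i2), inf_le_right, ?_⟩
      exact inf_le_left.trans (sup_le hu.le i3)
  have hgrow : ∀ k, f^[k] (z 0) ≤ f^[k + 1] (z 0) := by
    intro k
    rw [Function.iterate_succ_apply']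
    exact le_inf le_sup_right (hinv k).2.1
  obtain ⟨k, hk⟩ := exists_fix P f (z 0) hgrow
  rw [Function.iterate_succ_apply'] at hk
  set s := f^[k] (z 0) with hsdef
  have hfix : (z (e + 1) ⊔ s) ⊓ z 1 = s := hk
  obtain ⟨hs0, hs1, hsn⟩ := hinv k
  by_cases hb1 : s ≤ z (e + 1)
  · exact IH (e + 1) (by omega) (by omega) z (zig_mono hz (by omega)) (Or.inl (hs0.trans hb1))
  by_cases hb2 : z (e + 1) ≤ s
  · refine IH e (by omega) (by omega) (fun i => z (1 + i)) (zig_seg hz 1 e (by omega)) (Or.inr ?_)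
    show z (1 + e) ≤ z (1 + 0)
    rw [show 1 + e = e + 1 by omega, show 1 + 0 = 1 by rfl]
    exact hb2.trans hs1
  by_cases hb3 : z 1 ≤ s
  · refine IH (e + 1) (by omega) (by omega) (fun i => z (1 + i)) (zig_seg hz 1 (e + 1) (by omega)) (Or.inl ?_)
    show z (1 + 0) ≤ z (1 + (e + 1))
    rw [show 1 + (e + 1) = e + 2 by omega, show 1 + 0 = 1 by rfl]
    exact hb3.trans hsn
  have hst : s < z (e + 1) ⊔ s := right_lt_sup.mpr hb2
  have het : z (e + 1) < z (e + 1) ⊔ s := left_lt_sup.mpr hb1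
  have hs1' : s < z 1 := lt_of_le_not_ge hs1 hb3
  set t := z (e + 1) ⊔ s with htdef
  -- the cycle
  set g : ℕ → M := fun j => if j = 0 then s else if j = e + 2 then t else z j with hgdef
  have hg0 : g 0 = s := by simp [hgdef]
  have hgn : g (e + 2) = t := by simp [hgdef]
  have hgz : ∀ j, j ≠ 0 → j ≠ e + 2 → g j = z j := by
    intro j hj1 hj2
    simp [hgdef, hj1, hj2]
  refine absurd ?_ (P.simplyConnected (fun i => g (i % (e + 3))) (m0 + 1))
  have h2m : 2 * (m0 + 1) = e + 3 := by omega
  refine ⟨by omega, fun i => by simp only [h2m, Nat.add_mod_right], fun i => ?_⟩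
  simp only
  have hi1 : (i + 1) % (e + 3) = (i % (e + 3) + 1) % (e + 3) := (Nat.mod_add_mod i (e + 3) 1).symm
  have hi2 : (i + 2) % (e + 3) = (i % (e + 3) + 2) % (e + 3) := (Nat.mod_add_mod i (e + 3) 2).symm
  rw [hi1, hi2]
  set j := i % (e + 3) with hjdef
  have hj : j < e + 3 := Nat.mod_lt _ (by omega)
  by_cases hj0 : j = 0
  · rw [hj0, Nat.mod_eq_of_lt (show 0 + 1 < e + 3 by omega),
      Nat.mod_eq_of_lt (show 0 + 2 < e + 3 by omega)]
    rw [hg0, show (0:ℕ) + 1 = 1 from rfl, show (0:ℕ) + 2 = 2 from rfl,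
      hgz 1 (by omega) (by omega), hgz 2 (by omega) (by omega)]
    refine Or.inr ⟨hs1', ?_, ?_⟩
    · exact h21
    · refine le_antisymm ?_ (sup_le hs1 h21.le)
      calc z 1 = z 0 ⊔ z 2 := h1eq
        _ ≤ s ⊔ z 2 := sup_le_sup_right hs0 _
  by_cases hjn2 : j = e + 2
  · rw [hjn2]
    rw [show e + 2 + 1 = e + 3 from rfl, Nat.mod_self,
      show e + 2 + 2 = (e + 3) + 1 from rfl, Nat.add_mod_left,
      Nat.mod_eq_of_lt (show 1 < e + 3 by omega)]
    rw [hgn, hg0, hgz 1 (by omega) (by omega)]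
    exact Or.inl ⟨hst, hs1', hfix.symm⟩
  by_cases hje1 : j = e + 1
  · rw [hje1]
    rw [show e + 1 + 1 = e + 2 from rfl, Nat.mod_eq_of_lt (show e + 2 < e + 3 by omega),
      show e + 1 + 2 = e + 3 from rfl, Nat.mod_self]
    rw [hgn, hg0, hgz (e + 1) (by omega) (by omega)]
    exact Or.inr ⟨het, hst, rfl⟩
  by_cases hje : j = e
  · rw [hje]
    rw [Nat.mod_eq_of_lt (show e + 1 < e + 3 by omega),
      Nat.mod_eq_of_lt (show e + 2 < e + 3 by omega)]
    rw [hgn, hgz e (by omega) (by omega), hgz (e + 1) (by omega) (by omega)]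
    refine Or.inl ⟨hse1, het, ?_⟩
    refine le_antisymm (le_inf hse1.le het.le) ?_
    calc z e ⊓ t ≤ z e ⊓ z (e + 2) := inf_le_inf_left _ (sup_le hu.le hsn)
      _ = z (e + 1) := heq.symm
  · rw [Nat.mod_eq_of_lt (show j + 1 < e + 3 by omega),
      Nat.mod_eq_of_lt (show j + 2 < e + 3 by omega)]
    rw [hgz j (by omega) (by omega), hgz (j + 1) (by omega) (by omega),
      hgz (j + 2) (by omega) (by omega)]
    exact hz.2 j (by omega)

lemma zig_rev {M : Type*} [Lattice M] {z : ℕ → M} {n : ℕ} (hz : IsZigzag z n) :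
    IsZigzag (fun i => z (n - i)) n := by
  constructor
  · intro i hi
    have hj : n - i = (n - (i + 1)) + 1 := by omega
    simp only [hj]
    exact (hz.1 (n - (i + 1)) (by omega)).symm
  · intro i hi
    have h2 : n - i = (n - (i + 2)) + 2 := by omega
    have h1 : n - (i + 1) = (n - (i + 2)) + 1 := by omega
    simp only [h1, h2]
    rcases hz.2 (n - (i + 2)) (by omega) with ⟨ha, hb, hc⟩ | ⟨ha, hb, hc⟩
    · exact Or.inl ⟨hb, ha, by rw [hc, inf_comm]⟩
    · exact Or.inr ⟨hb, ha, by rw [hc, sup_comm]⟩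

lemma no_comp {N : ℕ} {M : Type*} [Lattice M] [BoundedOrder M] (P : FreePseudospace N M) :
    ∀ n, 2 ≤ n → ∀ z : ℕ → M, IsZigzag z n → (z 0 ≤ z n ∨ z n ≤ z 0) → False := by
  intro n
  induction n using Nat.strong_induction_on with
  | _ n IH =>
    intro hn z hz hcomp
    obtain ⟨e, rfl⟩ : ∃ e, n = e + 2 := ⟨n - 2, by omega⟩
    rcases Nat.eq_zero_or_pos e with rfl | hepos
    · -- base case n = 2
      rcases hz.2 0 (by omega) with ⟨h1, h2, h3⟩ | ⟨h1, h2, h3⟩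
      · rcases hcomp with hle | hge
        · have : z (0 + 1) = z 0 := by rw [h3, inf_eq_left.mpr hle]
          exact h1.ne this
        · have : z (0 + 1) = z (0 + 2) := by rw [h3, inf_eq_right.mpr hge]
          exact h2.ne this
      · rcases hcomp with hle | hge
        · have : z (0 + 1) = z (0 + 2) := by rw [h3, sup_eq_right.mpr hle]
          exact h2.ne' this
        · have : z (0 + 1) = z 0 := by rw [h3, sup_eq_left.mpr hge]
          exact h1.ne' this
    · have d0 := hz.1 0 (by omega)
      have dend := hz.1 (e + 1) (by omega)
      rcases hcomp with hle | hge
      · rcases dend with hu | hd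
        · rcases d0 with hU | hD
          · exact L7 P e hepos z hz hU hu hle (fun m hm h2 w hw hc => IH m hm h2 w hw hc)
          · refine IH (e + 1) (by omega) (by omega) (fun i => z (1 + i))
              (zig_seg hz 1 (e + 1) (by omega)) (Or.inl ?_)
            show z (1 + 0) ≤ z (1 + (e + 1))
            rw [show 1 + (e + 1) = e + 2 by omega, show 1 + 0 = 1 from rfl]
            exact hD.le.trans hle
        · exact IH (e + 1) (by omega) (by omega) z (zig_mono hz (by omega))
            (Or.inl (hle.trans hd.le))
      · rcases d0 with hU | hD
        · refine IH (e + 1) (by omega) (by omega) (fun i => z (1 + i))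
            (zig_seg hz 1 (e + 1) (by omega)) (Or.inr ?_)
          show z (1 + (e + 1)) ≤ z (1 + 0)
          rw [show 1 + (e + 1) = e + 2 by omega, show 1 + 0 = 1 from rfl]
          exact hge.trans hU.le
        · rcases dend with hu | hd
          · exact IH (e + 1) (by omega) (by omega) z (zig_mono hz (by omega))
              (Or.inr (hu.le.trans hge))
          · refine L7 P e hepos (fun i => z (e + 2 - i)) (zig_rev hz) ?_ ?_ ?_
              (fun m hm h2 w hw hc => IH m hm h2 w hw hc)
            · show z (e + 2 - 0) < z (e + 2 - 1)
              rw [show e + 2 - 0 = e + 2 from rfl, show e + 2 - 1 = e + 1 from rfl]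
              exact hd
            · show z (e + 2 - (e + 1)) < z (e + 2 - (e + 2))
              rw [show e + 2 - (e + 1) = 1 by omega, show e + 2 - (e + 2) = 0 by omega]
              exact hD
            · show z (e + 2 - 0) ≤ z (e + 2 - (e + 2))
              rw [show e + 2 - 0 = e + 2 from rfl, show e + 2 - (e + 2) = 0 by omega]
              exact hge

lemma shrink {N : ℕ} {M : Type*} [Lattice M] [BoundedOrder M] (P : FreePseudospace N M)
    (A : Set M) :
    ∀ (d : ℕ) (p : ℕ → M) (k : ℕ), IsZigzag p (k + 2) → (∀ i < k + 2, p i ∉ A) →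
      p (k + 2) ∈ A → (P.layer (p (k + 2)) - P.layer (p (k + 1))).natAbs ≤ d →
      ∃ q : ℕ → M, q 0 = p 0 ∧ IsDirectPath q (k + 2) A := by
  classical
  intro d
  induction d using Nat.strong_induction_on with
  | _ d IHd =>
    intro p k hz hni hpn hd
    by_cases hy : ∃ y ∈ A, (p (k + 1) < y ∧ y < p (k + 2)) ∨ (p (k + 2) < y ∧ y < p (k + 1))
    · obtain ⟨y, hyA, hyb⟩ := hy
      set q : ℕ → M := Function.update p (k + 2) y with hqdef
      have hqe : ∀ i, i ≠ k + 2 → q i = p i := fun i hi => Function.update_of_ne hi _ _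
      have hqn : q (k + 2) = y := Function.update_self _ _ _
      have hzq : IsZigzag q (k + 2) := by
        constructor
        · intro i hi
          by_cases hik : i = k + 1
          · subst hik
            rw [hqe (k + 1) (by omega), hqn]
            rcases hyb with ⟨h1, h2⟩ | ⟨h1, h2⟩
            · exact Or.inl h1
            · exact Or.inr h2
          · rw [hqe i (by omega), hqe (i + 1) (by omega)]
            exact hz.1 i hi
        · intro i hi
          by_cases hik : i = k
          · rw [hik]
            rw [hqe k (by omega), hqe (k + 1) (by omega), hqn]
            rcases hz.2 k (by omega) with ⟨h1, h2, h3⟩ | ⟨h1, h2, h3⟩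
            · rcases hyb with ⟨hb1, hb2⟩ | ⟨hb1, hb2⟩
              · exact Or.inl ⟨h1, hb1,
                  le_antisymm (le_inf h1.le hb1.le) ((inf_le_inf_left _ hb2.le).trans h3.ge)⟩
              · exact absurd (hb1.trans hb2) (lt_asymm h2)
            · rcases hyb with ⟨hb1, hb2⟩ | ⟨hb1, hb2⟩
              · exact absurd (hb1.trans hb2) (lt_asymm h2)
              · exact Or.inr ⟨h1, hb2,
                  le_antisymm (h3.le.trans (sup_le_sup_left hb1.le _)) (sup_le h1.le hb2.le)⟩
          · rw [hqe i (by omega), hqe (i + 1) (by omega), hqe (i + 2) (by omega)]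
            exact hz.2 i hi
      have hmlt : (P.layer y - P.layer (p (k + 1))).natAbs <
          (P.layer (p (k + 2)) - P.layer (p (k + 1))).natAbs := by
        rcases hyb with ⟨h1, h2⟩ | ⟨h1, h2⟩
        · have l1 := P.layer_strictMono _ _ h1
          have l2 := P.layer_strictMono _ _ h2
          omega
        · have l1 := P.layer_strictMono _ _ h1
          have l2 := P.layer_strictMono _ _ h2
          omega
      have hqni : ∀ i < k + 2, q i ∉ A := fun i hi => by
        rw [hqe i (by omega)]; exact hni i hi
      obtain ⟨r, hr0, hrd⟩ := IHd (P.layer (q (k + 2)) - P.layer (q (k + 1))).natAbs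
        (by rw [hqn, hqe (k + 1) (by omega)]; omega) q k hzq hqni
        (by rw [hqn]; exact hyA) le_rfl
      exact ⟨r, by rw [hr0, hqe 0 (by omega)], hrd⟩
    · refine ⟨p, rfl, hz, hni, hpn, ?_⟩
      intro y hyA hc
      exact hy ⟨y, hyA, hc⟩

/-- (Lemma 3.9) Let `A` be closed and `x ∉ A`.  Then `A ∪ {x}` is closed if and only
if there is no direct path from `x` to `A` of length at least `2`. -/
theorem insert_zclosed_iff_no_direct_path {N : ℕ} {M : Type*}
    [Lattice M] [BoundedOrder M] (P : FreePseudospace N M)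
    (A : Set M) (hA : ZClosed A) (x : M) (hx : x ∉ A) :
    ZClosed (insert x A) ↔
      ¬∃ (p : ℕ → M) (n : ℕ), 2 ≤ n ∧ p 0 = x ∧ IsDirectPath p n A := by
  classical
  constructor
  · rintro hC ⟨p, n, hn2, hp0, hzp, hnA, hpn, -⟩
    have h1 := hC.2.2 p n hzp (by rw [hp0]; exact Set.mem_insert _ _)
      (Set.mem_insert_of_mem _ hpn) 1 (by omega)
    have h1x : p 1 = x := by
      rcases h1 with h | h
      · exact h
      · exact absurd h (hnA 1 (by omega))
    rcases hzp.1 0 (by omega) with h | h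
    · rw [hp0, h1x] at h; exact lt_irrefl _ h
    · rw [hp0, h1x] at h; exact lt_irrefl _ h
  · intro hnp
    refine ⟨Set.mem_insert_of_mem _ hA.1, Set.mem_insert_of_mem _ hA.2.1, ?_⟩
    intro z n hz h0 hn i hi
    by_contra hzS
    have hi0 : i ≠ 0 := by rintro rfl; exact hzS h0
    have hin : i ≠ n := by rintro rfl; exact hzS hn
    -- a : greatest index ≤ i in insert x A
    have ha_ex : z (Nat.findGreatest (fun j => z j ∈ insert x A) i) ∈ insert x A :=
      Nat.findGreatest_spec (P := fun j => z j ∈ insert x A) (Nat.zero_le i) h0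
    set a := Nat.findGreatest (fun j => z j ∈ insert x A) i with hadef
    have hale : a ≤ i := Nat.findGreatest_le i
    have hane : a ≠ i := fun h => hzS (h ▸ ha_ex)
    have hamax : ∀ j, a < j → j ≤ i → z j ∉ insert x A :=
      fun j hj1 hj2 => Nat.findGreatest_is_greatest hj1 hj2
    -- b : least index ≥ i in insert x A
    have hbex : ∃ m, z (i + m) ∈ insert x A :=
      ⟨n - i, by rw [Nat.add_sub_cancel' hi]; exact hn⟩
    have hbS : z (i + Nat.find hbex) ∈ insert x A := Nat.find_spec hbex
    have hble : i + Nat.find hbex ≤ n := by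
      have := Nat.find_min' hbex (m := n - i) (by rw [Nat.add_sub_cancel' hi]; exact hn)
      omega
    have hfpos : 0 < Nat.find hbex := by
      rcases Nat.eq_zero_or_pos (Nat.find hbex) with h | h
      · exfalso
        apply hzS
        have := Nat.find_spec hbex
        rw [h] at this
        simpa using this
      · exact h
    have hint : ∀ j, a < j → j < i + Nat.find hbex → z j ∉ insert x A := by
      intro j h1 h2
      by_cases hji : j ≤ i
      · exact hamax j h1 hji
      · have hj2 : j = i + (j - i) := by omega
        rw [hj2]
        exact Nat.find_min hbex (by omega)
    obtain ⟨k, hk⟩ : ∃ k, i + Nat.find hbex = a + (k + 2) :=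
      ⟨i + Nat.find hbex - a - 2, by omega⟩
    have hwz : IsZigzag (fun t => z (a + t)) (k + 2) := zig_seg hz a (k + 2) (by omega)
    have hwm : z (a + (k + 2)) ∈ insert x A := by rw [← hk]; exact hbS
    have hwint : ∀ t, 0 < t → t < k + 2 → z (a + t) ∉ insert x A :=
      fun t h1 h2 => hint (a + t) (by omega) (by omega)
    rw [Set.mem_insert_iff] at ha_ex hwm
    rcases ha_ex with hw0x | hw0A
    · rcases hwm with hwmx | hwmA
      · -- both endpoints equal x : impossible
        refine no_comp P (k + 2) (by omega) (fun t => z (a + t)) hwz (Or.inl ?_)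
        show z (a + 0) ≤ z (a + (k + 2))
        rw [show a + 0 = a from rfl, hw0x, hwmx]
      · -- pre-path from x to A
        have hnotA : ∀ t < k + 2, z (a + t) ∉ A := by
          intro t ht
          rcases Nat.eq_zero_or_pos t with rfl | htp
          · rw [show a + 0 = a from rfl, hw0x]; exact hx
          · exact fun hmem => hwint t htp ht (Set.mem_insert_of_mem _ hmem)
        obtain ⟨q, hq0, hqd⟩ := shrink P A _ (fun t => z (a + t)) k hwz hnotA hwmA le_rfl
        exact hnp ⟨q, k + 2, by omega, by rw [hq0]; exact hw0x, hqd⟩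
    · rcases hwm with hwmx | hwmA
      · -- reversed pre-path
        have hrz : IsZigzag (fun t => z (a + (k + 2 - t))) (k + 2) := zig_rev hwz
        have hnotA : ∀ t < k + 2, z (a + (k + 2 - t)) ∉ A := by
          intro t ht
          rcases Nat.eq_zero_or_pos t with rfl | htp
          · rw [show k + 2 - 0 = k + 2 from rfl, hwmx]; exact hx
          · refine fun hmem => hint (a + (k + 2 - t)) (by omega) (by omega)
              (Set.mem_insert_of_mem _ hmem)
        have hrend : z (a + (k + 2 - (k + 2))) ∈ A := by
          rw [show k + 2 - (k + 2) = 0 by omega, show a + 0 = a from rfl]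
          exact hw0A
        obtain ⟨q, hq0, hqd⟩ := shrink P A _ (fun t => z (a + (k + 2 - t))) k hrz hnotA hrend le_rfl
        refine hnp ⟨q, k + 2, by omega, ?_, hqd⟩
        rw [hq0]
        show z (a + (k + 2 - 0)) = x
        rw [show k + 2 - 0 = k + 2 from rfl]
        exact hwmx
      · -- both endpoints in A : contradicts closedness of A
        have := hA.2.2 (fun t => z (a + t)) (k + 2) hwz hw0A hwmA 1 (by omega)
        exact hwint 1 (by omega) (by omega) (Set.mem_insert_of_mem _ this)
end

section
/- Let M be a free N-pseudospace, A a closed subset and x ∈ M \ A. Every direct path from x to A of length n ≥ 2 is contained in the open interval (⌊x⌋_A, ⌈x⌉_A), where ⌊x⌋_A = max{y ∈ A : y ≤ x} and ⌈x⌉_A = min{y ∈ A : x ≤ y}. -/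
section Aux

private lemma isZigzag_dual {M : Type*} [Lattice M] {p : ℕ → M} {n : ℕ}
    (h : IsZigzag p n) : IsZigzag (V := Mᵒᵈ) p n := by
  obtain ⟨h1, h2⟩ := h
  refine ⟨fun i hi => (h1 i hi).symm, fun i hi => ?_⟩
  rcases h2 i hi with ⟨u, v, e⟩ | ⟨u, v, e⟩
  · exact Or.inr ⟨u, v, e⟩
  · exact Or.inl ⟨u, v, e⟩

private lemma isZigzag_undual {M : Type*} [Lattice M] {p : ℕ → M} {n : ℕ}
    (h : IsZigzag (V := Mᵒᵈ) p n) : IsZigzag p n := by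
  obtain ⟨h1, h2⟩ := h
  refine ⟨fun i hi => (h1 i hi).symm, fun i hi => ?_⟩
  rcases h2 i hi with ⟨u, v, e⟩ | ⟨u, v, e⟩
  · exact Or.inr ⟨u, v, e⟩
  · exact Or.inl ⟨u, v, e⟩

private lemma zclosed_dual {M : Type*} [Lattice M] [BoundedOrder M] {A : Set M}
    (hA : ZClosed A) : ZClosed (M := Mᵒᵈ) A := by
  refine ⟨hA.2.1, hA.1, fun x n hx h0 hn i hi => hA.2.2 x n ?_ h0 hn i hi⟩
  exact isZigzag_undual hx

/-- Key lemma: along a direct path of length `≥ 2`, every point stays strictly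
below any element of `A` strictly above the starting point. -/
private lemma L2 {M : Type*} [Lattice M] [BoundedOrder M] {A : Set M} (hA : ZClosed A) :
    ∀ n, 2 ≤ n → ∀ p : ℕ → M, IsDirectPath p n A → ∀ c ∈ A, p 0 < c →
      ∀ i ≤ n, p i < c := by
  intro n hn
  induction n, hn using Nat.le_induction with
  | base =>
    intro p hp c hcA hc
    obtain ⟨hz, hnA, hEnd, hdir⟩ := hp
    have h1A : p 1 ∉ A := hnA 1 (by omega)
    have key : p 1 < c ∧ p 2 < c := by
      rcases hz.2 0 (le_refl 2) with ⟨h10, h12, hinf⟩ | ⟨h01, h21, hsup⟩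
      · -- valley: p 1 = p 0 ⊓ p 2
        refine ⟨h10.trans hc, ?_⟩
        have hc2 : ¬c ≤ p 2 := by
          intro h
          have : p 1 = p 0 := by rw [hinf, inf_eq_left]; exact (hc.trans_le h).le
          exact absurd this h10.ne
        by_cases hge : p 2 ≤ c
        · exact hge.lt_of_ne fun h => hc2 (le_of_eq h.symm)
        · exfalso
          have hts : c ⊓ p 2 < c := lt_of_le_of_ne inf_le_left fun h => hc2 (inf_eq_left.mp h)
          have htp : c ⊓ p 2 < p 2 := lt_of_le_of_ne inf_le_right fun h => hge (inf_eq_right.mp h)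
          set q : ℕ → M := fun j => match j with | 0 => c | 1 => c ⊓ p 2 | _ => p 2 with hq
          have hqz : IsZigzag q 2 := by
            constructor
            · intro i hi
              interval_cases i
              · exact Or.inr hts
              · exact Or.inl htp
            · intro i hi
              have hi0 : i = 0 := by omega
              subst hi0
              exact Or.inl ⟨hts, htp, rfl⟩
          have htA : (c ⊓ p 2) ∈ A := hA.2.2 q 2 hqz hcA hEnd 1 (by omega)
          have h1t : p 1 ≤ c ⊓ p 2 := le_inf (h10.trans hc).le h12.le
          rcases h1t.lt_or_eq with h | h
          · exact hdir _ htA (Or.inl ⟨h, htp⟩)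
          · exact h1A (h ▸ htA)
      · -- peak: p 1 = p 0 ⊔ p 2
        have h1c : p 1 < c := by
          by_cases hle : p 1 ≤ c
          · exact hle.lt_of_ne fun h => h1A (by rw [h]; exact hcA)
          by_cases hge : c ≤ p 1
          · exfalso
            have hcp1 : c < p 1 := hge.lt_of_ne fun h => h1A (by rw [← h]; exact hcA)
            set q : ℕ → M := fun j => match j with | 0 => c | k + 1 => p (k + 1) with hq
            have hqz : IsZigzag q 2 := by
              constructor
              · intro i hi
                interval_cases i
                · exact Or.inl hcp1
                · exact Or.inr h21
              · intro i hi
                have hi0 : i = 0 := by omega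
                subst hi0
                exact Or.inr ⟨hcp1, h21,
                  le_antisymm (hsup.trans_le (sup_le_sup_right hc.le _)) (sup_le hge h21.le)⟩
            exact h1A (hA.2.2 q 2 hqz hcA hEnd 1 (by omega))
          · exfalso
            have hsc : c ⊓ p 1 < c := lt_of_le_of_ne inf_le_left fun h => hge (inf_eq_left.mp h)
            have hs1 : c ⊓ p 1 < p 1 := lt_of_le_of_ne inf_le_right fun h => hle (inf_eq_right.mp h)
            have hp0s : p 0 ≤ c ⊓ p 1 := le_inf hc.le h01.le
            set q : ℕ → M := fun j => match j with
              | 0 => c | 1 => c ⊓ p 1 | 2 => p 1 | _ => p 2 with hq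
            have hqz : IsZigzag q 3 := by
              constructor
              · intro i hi
                interval_cases i
                · exact Or.inr hsc
                · exact Or.inl hs1
                · exact Or.inr h21
              · intro i hi
                have hi' : i = 0 ∨ i = 1 := by omega
                rcases hi' with rfl | rfl
                · exact Or.inl ⟨hsc, hs1, rfl⟩
                · exact Or.inr ⟨hs1, h21,
                    le_antisymm (hsup.trans_le (sup_le_sup_right hp0s _))
                      (sup_le hs1.le h21.le)⟩
            exact h1A (hA.2.2 q 3 hqz hcA hEnd 2 (by omega))
        have h2c : p 2 < c := h21.trans h1c
        exact ⟨h1c, h2c⟩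
    intro i hi
    interval_cases i
    · exact hc
    · exact key.1
    · exact key.2
  | succ n hn IH =>
    intro p hp c hcA hc
    obtain ⟨hz, hnA, hEnd, hdir⟩ := hp
    have h1A : p 1 ∉ A := hnA 1 (by omega)
    have hz' : IsZigzag (fun j => p (j + 1)) n :=
      ⟨fun i hi => hz.1 (i + 1) (by omega), fun i hi => hz.2 (i + 1) (by omega)⟩
    have hp' : IsDirectPath (fun j => p (j + 1)) n A := by
      refine ⟨hz', fun i hi => hnA (i + 1) (by omega), hEnd, ?_⟩
      intro y hy
      have e1 : n - 1 + 1 = n := by omega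
      have := hdir y hy
      simpa [e1, Nat.add_sub_cancel] using this
    have h1c : p 1 < c := by
      rcases hz.1 0 (by omega) with h01 | h10
      · rcases hz.2 0 (by omega) with ⟨h, _, _⟩ | ⟨_, h21, hsup⟩
        · exact absurd h01 h.asymm
        · by_cases hle : p 1 ≤ c
          · exact hle.lt_of_ne fun h => h1A (by rw [h]; exact hcA)
          by_cases hge : c ≤ p 1
          · exfalso
            have hcp1 : c < p 1 := hge.lt_of_ne fun h => h1A (by rw [← h]; exact hcA)
            set q : ℕ → M := fun j => match j with | 0 => c | k + 1 => p (k + 1) with hq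
            have hqz : IsZigzag q (n + 1) := by
              constructor
              · intro i hi
                rcases i with _ | k
                · exact Or.inl hcp1
                · exact hz.1 (k + 1) (by omega)
              · intro i hi
                rcases i with _ | k
                · exact Or.inr ⟨hcp1, h21,
                    le_antisymm (hsup.trans_le (sup_le_sup_right hc.le _)) (sup_le hge h21.le)⟩
                · exact hz.2 (k + 1) (by omega)
            exact h1A (hA.2.2 q (n + 1) hqz hcA hEnd 1 (by omega))
          · exfalso
            have hsc : c ⊓ p 1 < c := lt_of_le_of_ne inf_le_left fun h => hge (inf_eq_left.mp h)
            have hs1 : c ⊓ p 1 < p 1 := lt_of_le_of_ne inf_le_right fun h => hle (inf_eq_right.mp h)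
            have hp0s : p 0 ≤ c ⊓ p 1 := le_inf hc.le h01.le
            set q : ℕ → M := fun j => match j with
              | 0 => c | 1 => c ⊓ p 1 | k + 2 => p (k + 1) with hq
            have hqz : IsZigzag q (n + 2) := by
              constructor
              · intro i hi
                rcases i with _ | _ | k
                · exact Or.inr hsc
                · exact Or.inl hs1
                · exact hz.1 (k + 1) (by omega)
              · intro i hi
                rcases i with _ | _ | k
                · exact Or.inl ⟨hsc, hs1, rfl⟩
                · exact Or.inr ⟨hs1, h21,
                    le_antisymm (hsup.trans_le (sup_le_sup_right hp0s _))
                      (sup_le hs1.le h21.le)⟩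
                · exact hz.2 (k + 1) (by omega)
            exact h1A (hA.2.2 q (n + 2) hqz hcA hEnd 2 (by omega))
      · exact h10.trans hc
    intro i hi
    rcases i with _ | j
    · exact hc
    · exact IH (fun j => p (j + 1)) hp' c hcA h1c j (by omega)

/-- Dual key lemma, obtained from `L2` in the dual lattice. -/
private lemma L1 {M : Type*} [Lattice M] [BoundedOrder M] {A : Set M} (hA : ZClosed A)
    (n : ℕ) (hn : 2 ≤ n) (p : ℕ → M) (hp : IsDirectPath p n A) (c : M) (hcA : c ∈ A)
    (hc : c < p 0) : ∀ i ≤ n, c < p i := by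
  have hp' : IsDirectPath (M := Mᵒᵈ) p n A := by
    obtain ⟨hz, hnA, hEnd, hdir⟩ := hp
    refine ⟨isZigzag_dual hz, hnA, hEnd, fun y hy h => ?_⟩
    rcases h with ⟨u, v⟩ | ⟨u, v⟩
    · exact hdir y hy (Or.inr ⟨v, u⟩)
    · exact hdir y hy (Or.inl ⟨v, u⟩)
  exact L2 (M := Mᵒᵈ) (zclosed_dual hA) n hn p hp' c hcA hc

end Aux

/-- (Lemma 3.11) A direct path of length `n ≥ 2` from `x` to a closed set `A` is
contained in the open interval `(⌊x⌋_A, ⌈x⌉_A)`, where `⌊x⌋_A = max {y ∈ A ∣ y ≤ x}`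
and `⌈x⌉_A = min {y ∈ A ∣ x ≤ y}`. -/
theorem direct_path_mem_interval {N : ℕ} {M : Type*}
    [Lattice M] [BoundedOrder M] (P : FreePseudospace N M)
    (A : Set M) (hA : ZClosed A) (x : M) (hx : x ∉ A)
    (a b : M) (ha : IsGreatest {y ∈ A | y ≤ x} a) (hb : IsLeast {y ∈ A | x ≤ y} b)
    (p : ℕ → M) (n : ℕ) (hn : 2 ≤ n) (hp0 : p 0 = x) (hp : IsDirectPath p n A) :
    ∀ i ≤ n, a < p i ∧ p i < b := by
  intro i hi
  have hax : a < x := lt_of_le_of_ne ha.1.2 fun h => hx (by rw [← h]; exact ha.1.1)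
  have hxb : x < b := lt_of_le_of_ne hb.1.2 fun h => hx (by rw [h]; exact hb.1.1)
  constructor
  · exact L1 hA n hn p hp a ha.1.1 (by rw [hp0]; exact hax) i hi
  · exact L2 hA n hn p hp b hb.1.1 (by rw [hp0]; exact hxb) i hi
end

section
/- Let M be a free N-pseudospace, A a closed subset and x ∈ M \ A. If |x,A| = 2 (i.e. the layer indices of ⌊x⌋_A and ⌈x⌉_A differ by 2), then A ∪ {x} is closed. -/
namespace ZigAux

/-- prepend `c` to a sequence -/
def prep {M : Type*} (c : M) (z : ℕ → M) : ℕ → M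
  | 0 => c
  | k+1 => z k

/-- replace the first element of a sequence by `c` -/
def repl {M : Type*} (c : M) (z : ℕ → M) : ℕ → M
  | 0 => c
  | k+1 => z (k+1)

lemma zig_shift {M : Type*} [Lattice M] {z : ℕ → M} {n : ℕ} (h : IsZigzag z n) :
    IsZigzag (fun j => z (j+1)) (n-1) := by
  constructor
  · intro i hi
    exact h.1 (i+1) (by omega)
  · intro i hi
    have h2 := h.2 (i+1) (by omega)
    show (z (i+1+1) < z (i+1) ∧ z (i+1+1) < z (i+2+1) ∧ z (i+1+1) = z (i+1) ⊓ z (i+2+1)) ∨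
      (z (i+1) < z (i+1+1) ∧ z (i+2+1) < z (i+1+1) ∧ z (i+1+1) = z (i+1) ⊔ z (i+2+1))
    have e : i+2+1 = i+1+2 := by omega
    rw [e]
    exact h2

lemma zig_reverse {M : Type*} [Lattice M] {z : ℕ → M} {n : ℕ} (h : IsZigzag z n) :
    IsZigzag (fun j => z (n - j)) n := by
  constructor
  · intro i hi
    have h1 := h.1 (n - i - 1) (by omega)
    have e : n - i - 1 + 1 = n - i := by omega
    rw [e] at h1
    show z (n - i) < z (n - (i+1)) ∨ z (n - (i+1)) < z (n - i)
    have e2 : n - (i+1) = n - i - 1 := by omega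
    rw [e2]
    tauto
  · intro i hi
    have h2 := h.2 (n - i - 2) (by omega)
    have e1 : n - i - 2 + 1 = n - (i+1) := by omega
    have e2 : n - i - 2 + 2 = n - i := by omega
    have e3 : n - i - 2 = n - (i + 2) := by omega
    rw [e1, e2, e3] at h2
    show (z (n-(i+1)) < z (n-i) ∧ z (n-(i+1)) < z (n-(i+2)) ∧ z (n-(i+1)) = z (n-i) ⊓ z (n-(i+2))) ∨
      (z (n-i) < z (n-(i+1)) ∧ z (n-(i+2)) < z (n-(i+1)) ∧ z (n-(i+1)) = z (n-i) ⊔ z (n-(i+2)))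
    rcases h2 with ⟨h3, h4, h5⟩ | ⟨h3, h4, h5⟩
    · exact Or.inl ⟨h4, h3, by rw [h5, inf_comm]⟩
    · exact Or.inr ⟨h4, h3, by rw [h5, sup_comm]⟩

lemma zig_prepend_inf {M : Type*} [Lattice M] {z : ℕ → M} {n : ℕ} {c : M}
    (h : IsZigzag z n) (h1 : z 0 < c) (h2 : z 0 < z 1) (h3 : z 0 = c ⊓ z 1) :
    IsZigzag (prep c z) (n+1) := by
  constructor
  · rintro (_ | k) hi
    · exact Or.inr h1
    · exact h.1 k (by omega)
  · rintro (_ | k) hi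
    · exact Or.inl ⟨h1, h2, h3⟩
    · exact h.2 k (by omega)

lemma zig_prepend_sup {M : Type*} [Lattice M] {z : ℕ → M} {n : ℕ} {c : M}
    (h : IsZigzag z n) (h1 : c < z 0) (h2 : z 1 < z 0) (h3 : z 0 = c ⊔ z 1) :
    IsZigzag (prep c z) (n+1) := by
  constructor
  · rintro (_ | k) hi
    · exact Or.inl h1
    · exact h.1 k (by omega)
  · rintro (_ | k) hi
    · exact Or.inr ⟨h1, h2, h3⟩
    · exact h.2 k (by omega)

lemma zig_replace_up {M : Type*} [Lattice M] {z : ℕ → M} {n : ℕ} {c : M}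
    (h : IsZigzag z n) (hn : 1 ≤ n) (h1 : z 0 ≤ c) (h2 : c < z 1) :
    IsZigzag (repl c z) n := by
  constructor
  · rintro (_ | k) hi
    · exact Or.inl h2
    · exact h.1 (k+1) hi
  · rintro (_ | k) hi
    · rcases h.2 0 hi with ⟨g1, g2, g3⟩ | ⟨g1, g2, g3⟩
      · exact absurd (lt_trans g1 (lt_of_le_of_lt h1 h2)) (lt_irrefl _)
      · refine Or.inr ⟨h2, g2, le_antisymm ?_ (sup_le h2.le g2.le)⟩
        show z (0+1) ≤ c ⊔ z (0+2)
        rw [g3]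
        exact sup_le_sup_right h1 _
    · exact h.2 (k+1) hi

lemma zig_replace_down {M : Type*} [Lattice M] {z : ℕ → M} {n : ℕ} {c : M}
    (h : IsZigzag z n) (hn : 1 ≤ n) (h1 : c ≤ z 0) (h2 : z 1 < c) :
    IsZigzag (repl c z) n := by
  constructor
  · rintro (_ | k) hi
    · exact Or.inr h2
    · exact h.1 (k+1) hi
  · rintro (_ | k) hi
    · rcases h.2 0 hi with ⟨g1, g2, g3⟩ | ⟨g1, g2, g3⟩
      · refine Or.inl ⟨h2, g2, le_antisymm (le_inf h2.le g2.le) ?_⟩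
        show c ⊓ z (0+2) ≤ z (0+1)
        rw [g3]
        exact inf_le_inf_right _ h1
      · exact absurd (lt_trans g1 (lt_of_lt_of_le h2 h1)) (lt_irrefl _)
    · exact h.2 (k+1) hi

end ZigAux

open ZigAux in
/-- (Corollary 3.12) If `A` is closed, `x ∉ A` and `|x, A| = 2` (the layer indices of
`⌊x⌋_A` and `⌈x⌉_A` differ by `2`), then `A ∪ {x}` is closed. -/
theorem insert_zclosed_of_dist_two {N : ℕ} {M : Type*}
    [Lattice M] [BoundedOrder M] (P : FreePseudospace N M)
    (A : Set M) (hA : ZClosed A) (x : M) (hx : x ∉ A)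
    (a b : M) (ha : IsGreatest {y ∈ A | y ≤ x} a) (hb : IsLeast {y ∈ A | x ≤ y} b)
    (hdist : |P.layer b - P.layer a| = 2) :
    ZClosed (insert x A) := by
  obtain ⟨⟨haA, haxle⟩, hamax⟩ := ha
  obtain ⟨⟨hbA, hxble⟩, hbmin⟩ := hb
  have hax' : a < x := lt_of_le_of_ne haxle (fun h => hx (h ▸ haA))
  have hxb' : x < b := lt_of_le_of_ne hxble (fun h => hx (by rw [h]; exact hbA))
  have hab : a < b := lt_trans hax' hxb'
  have hd2 : P.layer b = P.layer a + 2 := by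
    have h1 := P.layer_strictMono a b hab
    rcases abs_cases (P.layer b - P.layer a) with ⟨h, _⟩ | ⟨h, _⟩ <;> omega
  have hlx : P.layer x = P.layer a + 1 := by
    have h1 := P.layer_strictMono a x hax'
    have h2 := P.layer_strictMono x b hxb'
    omega
  -- covering lemmas
  have hup : ∀ y, x < y → b ≤ y ∨ x = b ⊓ y := by
    intro y hxy
    rcases eq_or_lt_of_le (le_inf hxb'.le hxy.le) with h | h
    · exact Or.inr h
    · rcases eq_or_lt_of_le (inf_le_left : b ⊓ y ≤ b) with h' | h'
      · exact Or.inl (by rw [← h']; exact inf_le_right)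
      · exfalso
        have g1 := P.layer_strictMono _ _ h
        have g2 := P.layer_strictMono _ _ h'
        omega
  have hdn : ∀ y, y < x → y ≤ a ∨ x = a ⊔ y := by
    intro y hyx
    rcases eq_or_lt_of_le (sup_le haxle hyx.le : a ⊔ y ≤ x) with h | h
    · exact Or.inr h.symm
    · rcases eq_or_lt_of_le (le_sup_left : a ≤ a ⊔ y) with h' | h'
      · exact Or.inl (sup_eq_left.mp h'.symm)
      · exfalso
        have g1 := P.layer_strictMono _ _ h'
        have g2 := P.layer_strictMono _ _ h
        omega
  -- key lemma: left endpoint x, right endpoint in A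
  have keyL : ∀ (z : ℕ → M) (n : ℕ), IsZigzag z n → z 0 = x → z n ∈ A →
      ∀ i, 1 ≤ i → i ≤ n → z i ∈ A := by
    intro z n hz h0 hnA i hi1 hin
    have hn1 : 1 ≤ n := le_trans hi1 hin
    obtain ⟨k, rfl⟩ : ∃ k, i = k + 1 := ⟨i - 1, by omega⟩
    have hc := hz.1 0 (by omega)
    rw [h0] at hc
    rcases hc with hcu | hcd
    · rcases hup (z 1) hcu with hble | hbm
      · rcases eq_or_lt_of_le hble with hbe | hbl
        · have hz' := zig_shift hz
          have h₀ : (fun j => z (j+1)) 0 ∈ A := by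
            show z 1 ∈ A; rw [← hbe]; exact hbA
          have hend : (fun j => z (j+1)) (n-1) ∈ A := by
            show z (n-1+1) ∈ A
            rw [show n - 1 + 1 = n by omega]; exact hnA
          exact hA.2.2 _ (n-1) hz' h₀ hend k (by omega)
        · have hw := zig_replace_up hz hn1 (by rw [h0]; exact hxb'.le) hbl
          have hend : repl b z n ∈ A := by
            obtain ⟨m, rfl⟩ : ∃ m, n = m + 1 := ⟨n - 1, by omega⟩
            exact hnA
          exact hA.2.2 _ n hw hbA hend (k+1) hin
      · exfalso
        have hw := zig_prepend_inf hz (by rw [h0]; exact hxb') (by rw [h0]; exact hcu)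
          (by rw [h0]; exact hbm)
        have hend : prep b z (n+1) ∈ A := hnA
        have hx1 : z 0 ∈ A := hA.2.2 _ (n+1) hw hbA hend 1 (by omega)
        rw [h0] at hx1
        exact hx hx1
    · rcases hdn (z 1) hcd with hale | ham
      · rcases eq_or_lt_of_le hale with hae | hal
        · have hz' := zig_shift hz
          have h₀ : (fun j => z (j+1)) 0 ∈ A := by
            show z 1 ∈ A; rw [hae]; exact haA
          have hend : (fun j => z (j+1)) (n-1) ∈ A := by
            show z (n-1+1) ∈ A
            rw [show n - 1 + 1 = n by omega]; exact hnA
          exact hA.2.2 _ (n-1) hz' h₀ hend k (by omega)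
        · have hw := zig_replace_down hz hn1 (by rw [h0]; exact haxle) hal
          have hend : repl a z n ∈ A := by
            obtain ⟨m, rfl⟩ : ∃ m, n = m + 1 := ⟨n - 1, by omega⟩
            exact hnA
          exact hA.2.2 _ n hw haA hend (k+1) hin
      · exfalso
        have hw := zig_prepend_sup hz (by rw [h0]; exact hax') (by rw [h0]; exact hcd)
          (by rw [h0]; exact ham)
        have hend : prep a z (n+1) ∈ A := hnA
        have hx1 : z 0 ∈ A := hA.2.2 _ (n+1) hw haA hend 1 (by omega)
        rw [h0] at hx1
        exact hx hx1
  -- key lemma: right endpoint x, left endpoint in A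
  have keyR : ∀ (z : ℕ → M) (n : ℕ), IsZigzag z n → z 0 ∈ A → z n = x →
      ∀ i < n, z i ∈ A := by
    intro z n hz h0 hn i hi
    have hr := zig_reverse hz
    have h1 : (fun j => z (n - j)) 0 = x := by simpa using hn
    have h2 : (fun j => z (n - j)) n ∈ A := by simpa using h0
    have h3 := keyL _ n hr h1 h2 (n - i) (by omega) (by omega)
    simpa [show n - (n - i) = i by omega] using h3
  -- key lemma: both endpoints x
  have keyX : ∀ (z : ℕ → M) (n : ℕ), IsZigzag z n → z 0 = x → z n = x →
      ∀ i, 1 ≤ i → i < n → z i ∈ A := by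
    intro z n hz h0 hnx i hi1 hin
    have hn1 : 1 ≤ n := by omega
    obtain ⟨k, rfl⟩ : ∃ k, i = k + 1 := ⟨i - 1, by omega⟩
    have hc := hz.1 0 (by omega)
    rw [h0] at hc
    rcases hc with hcu | hcd
    · rcases hup (z 1) hcu with hble | hbm
      · rcases eq_or_lt_of_le hble with hbe | hbl
        · have hz' := zig_shift hz
          have h₀ : (fun j => z (j+1)) 0 ∈ A := by
            show z 1 ∈ A; rw [← hbe]; exact hbA
          have hend : (fun j => z (j+1)) (n-1) = x := by
            show z (n-1+1) = x
            rw [show n - 1 + 1 = n by omega]; exact hnx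
          exact keyR _ (n-1) hz' h₀ hend k (by omega)
        · have hw := zig_replace_up hz hn1 (by rw [h0]; exact hxb'.le) hbl
          have hend : repl b z n = x := by
            obtain ⟨m, rfl⟩ : ∃ m, n = m + 1 := ⟨n - 1, by omega⟩
            exact hnx
          exact keyR _ n hw hbA hend (k+1) hin
      · exfalso
        have hw := zig_prepend_inf hz (by rw [h0]; exact hxb') (by rw [h0]; exact hcu)
          (by rw [h0]; exact hbm)
        have hend : prep b z (n+1) = x := hnx
        have hx1 : z 0 ∈ A := keyR _ (n+1) hw hbA hend 1 (by omega)
        rw [h0] at hx1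
        exact hx hx1
    · rcases hdn (z 1) hcd with hale | ham
      · rcases eq_or_lt_of_le hale with hae | hal
        · have hz' := zig_shift hz
          have h₀ : (fun j => z (j+1)) 0 ∈ A := by
            show z 1 ∈ A; rw [hae]; exact haA
          have hend : (fun j => z (j+1)) (n-1) = x := by
            show z (n-1+1) = x
            rw [show n - 1 + 1 = n by omega]; exact hnx
          exact keyR _ (n-1) hz' h₀ hend k (by omega)
        · have hw := zig_replace_down hz hn1 (by rw [h0]; exact haxle) hal
          have hend : repl a z n = x := by
            obtain ⟨m, rfl⟩ : ∃ m, n = m + 1 := ⟨n - 1, by omega⟩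
            exact hnx
          exact keyR _ n hw haA hend (k+1) hin
      · exfalso
        have hw := zig_prepend_sup hz (by rw [h0]; exact hax') (by rw [h0]; exact hcd)
          (by rw [h0]; exact ham)
        have hend : prep a z (n+1) = x := hnx
        have hx1 : z 0 ∈ A := keyR _ (n+1) hw haA hend 1 (by omega)
        rw [h0] at hx1
        exact hx hx1
  refine ⟨Set.mem_insert_iff.mpr (Or.inr hA.1), Set.mem_insert_iff.mpr (Or.inr hA.2.1), ?_⟩
  intro z n hz h0 hn i hin
  rcases Set.mem_insert_iff.mp h0 with h0x | h0A <;>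
    rcases Set.mem_insert_iff.mp hn with hnx | hnA
  · by_cases hi0 : i = 0
    · rw [hi0, h0x]; exact Set.mem_insert x A
    · by_cases hiN : i = n
      · rw [hiN, hnx]; exact Set.mem_insert x A
      · exact Set.mem_insert_iff.mpr
          (Or.inr (keyX z n hz h0x hnx i (by omega) (by omega)))
  · by_cases hi0 : i = 0
    · rw [hi0, h0x]; exact Set.mem_insert x A
    · exact Set.mem_insert_iff.mpr (Or.inr (keyL z n hz h0x hnA i (by omega) hin))
  · by_cases hiN : i = n
    · rw [hiN, hnx]; exact Set.mem_insert x A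
    · exact Set.mem_insert_iff.mpr (Or.inr (keyR z n hz h0A hnx i (by omega)))
  · exact Set.mem_insert_iff.mpr (Or.inr (hA.2.2 z n hz h0A hnA i hin))
end

section
/- Let M be a free N-pseudospace, A a closed subset and z ∈ M \ A. Then the set {x_1 : z, x_1, …, x_n is a direct path from z to A} of all second elements of direct paths from z to A is a flag, i.e. linearly ordered by the order of M. -/
section Aux

variable {V : Type*} [Lattice V]

lemma isZigzag_dual_s18 (x : ℕ → V) (n : ℕ) :
    IsZigzag (V := Vᵒᵈ) x n ↔ IsZigzag x n := by
  unfold IsZigzag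
  constructor <;> rintro ⟨h1, h2⟩ <;>
    exact ⟨fun i hi => (h1 i hi).symm, fun i hi => (h2 i hi).symm⟩

lemma isDirectPath_dual (x : ℕ → V) (n : ℕ) (A : Set V) :
    IsDirectPath (M := Vᵒᵈ) x n A ↔ IsDirectPath x n A := by
  unfold IsDirectPath
  rw [isZigzag_dual_s18]
  constructor <;> rintro ⟨h1, h2, h3, h4⟩ <;>
    refine ⟨h1, h2, h3, fun y hy hc => h4 y hy ?_⟩ <;> tauto

lemma zClosed_dual [BoundedOrder V] {A : Set V} (hA : ZClosed A) :
    ZClosed (M := Vᵒᵈ) A := by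
  refine ⟨hA.2.1, hA.1, fun x n hx h0 hn => ?_⟩
  exact hA.2.2 x n ((isZigzag_dual_s18 (V := V) x n).mp hx) h0 hn

/-- The core argument: two direct paths from `z` to `A` whose second elements are
both strictly above `z` have comparable second elements. -/
lemma core_above {M : Type*} [Lattice M] [BoundedOrder M]
    (A : Set M) (hA : ZClosed A) {z : M} (hz : z ∉ A)
    {p q : ℕ → M} {n m : ℕ} (hp0 : p 0 = z) (hp : IsDirectPath p n A)
    (hq0 : q 0 = z) (hq : IsDirectPath q m A)
    (hb : z < p 1) (hb' : z < q 1)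
    (h1 : ¬ p 1 ≤ q 1) (h2 : ¬ q 1 ≤ p 1) : False := by
  obtain ⟨hpz, hpint, hpA, hpgate⟩ := hp
  obtain ⟨hqz, hqint, hqA, hqgate⟩ := hq
  have hn : 1 ≤ n := by
    rcases Nat.eq_zero_or_pos n with h | h
    · subst h; exact absurd hpA (hp0 ▸ hz)
    · exact h
  have hm : 1 ≤ m := by
    rcases Nat.eq_zero_or_pos m with h | h
    · subst h; exact absurd hqA (hq0 ▸ hz)
    · exact h
  set b := p 1 with hbdef
  set b' := q 1 with hb'def
  set w := b ⊓ b' with hwdef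
  have hwb : w < b := lt_of_le_of_ne inf_le_left (fun h => h1 (inf_eq_left.mp h))
  have hwb' : w < b' := lt_of_le_of_ne inf_le_right (fun h => h2 (inf_eq_right.mp h))
  have hzw : z ≤ w := le_inf hb.le hb'.le
  set r : ℕ → M := fun i => if i < n then p (n - i) else if i = n then w else q (i - n)
    with hrdef
  have hrp : ∀ i, i < n → r i = p (n - i) := fun i hi => if_pos hi
  have hrn : r n = w := by simp [hrdef]
  have hrq : ∀ i, n < i → r i = q (i - n) := by
    intro i hi
    simp only [hrdef]
    rw [if_neg (by omega), if_neg (by omega)]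
  -- the joint at `b`
  have hpk : 2 ≤ n → p 2 < b ∧ b = p 2 ⊔ w := by
    intro h2n
    rcases hpz.2 0 h2n with ⟨hlt, -, -⟩ | ⟨-, hlt2, heq⟩
    · rw [hp0] at hlt; exact absurd hb (asymm hlt)
    · rw [hp0] at heq
      refine ⟨hlt2, le_antisymm ?_ (sup_le hlt2.le hwb.le)⟩
      calc b = z ⊔ p 2 := heq
        _ ≤ w ⊔ p 2 := sup_le_sup_right hzw _
        _ = p 2 ⊔ w := sup_comm _ _
  -- the joint at `b'`
  have hqk : 2 ≤ m → q 2 < b' ∧ b' = w ⊔ q 2 := by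
    intro h2m
    rcases hqz.2 0 h2m with ⟨hlt, -, -⟩ | ⟨-, hlt2, heq⟩
    · rw [hq0] at hlt; exact absurd hb' (asymm hlt)
    · rw [hq0] at heq
      refine ⟨hlt2, le_antisymm ?_ (sup_le hwb'.le hlt2.le)⟩
      calc b' = z ⊔ q 2 := heq
        _ ≤ w ⊔ q 2 := sup_le_sup_right hzw _
  have hrb : ∀ i, i + 1 = n → r i = b := by
    intro i hi
    rw [hrp i (by omega)]
    congr 1
    omega
  have hrzig : IsZigzag r (n + m) := by
    constructor
    · intro i hi
      rcases lt_trichotomy (i + 1) n with h | h | h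
      · rw [hrp i (by omega), hrp (i + 1) h]
        have e1 : n - i = (n - i - 1) + 1 := by omega
        have e2 : n - (i + 1) = n - i - 1 := by omega
        rw [e1, e2]
        exact (hpz.1 (n - i - 1) (by omega)).symm
      · rw [hrb i h, show i + 1 = n from h, hrn]
        exact Or.inr hwb
      · rcases Nat.lt_or_ge n (i) with h' | h'
        · rw [hrq i h', hrq (i + 1) (by omega)]
          have e1 : i + 1 - n = (i - n) + 1 := by omega
          rw [e1]
          exact hqz.1 (i - n) (by omega)
        · have hin : i = n := by omega
          rw [hin, hrn, hrq (n + 1) (by omega), show n + 1 - n = 1 from by omega]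
          exact Or.inl hwb'
    · intro i hi
      rcases lt_trichotomy (i + 2) n with h | h | h
      · -- all three points inside the reversed `p` part
        rw [hrp i (by omega), hrp (i + 1) (by omega), hrp (i + 2) h]
        have e0 : n - i = (n - i - 2) + 2 := by omega
        have e1 : n - (i + 1) = (n - i - 2) + 1 := by omega
        have e2 : n - (i + 2) = n - i - 2 := by omega
        rw [e0, e1, e2]
        rcases hpz.2 (n - i - 2) (by omega) with ⟨a1, a2, a3⟩ | ⟨a1, a2, a3⟩
        · exact Or.inl ⟨a2, a1, by rw [a3, inf_comm]⟩
        · exact Or.inr ⟨a2, a1, by rw [a3, sup_comm]⟩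
      · -- points `p 2, b, w`
        obtain ⟨c1, c2⟩ := hpk (by omega)
        rw [hrp i (by omega), hrb (i + 1) (by omega), show i + 2 = n from h, hrn]
        rw [show n - i = 2 from by omega]
        exact Or.inr ⟨c1, hwb, c2⟩
      · rcases Nat.lt_or_ge (n + 1) (i + 1) with h' | h'
        · -- all three points inside the `q` part
          rw [hrq i (by omega), hrq (i + 1) (by omega), hrq (i + 2) (by omega)]
          have e1 : i + 1 - n = (i - n) + 1 := by omega
          have e2 : i + 2 - n = (i - n) + 2 := by omega
          rw [e1, e2]
          exact hqz.2 (i - n) (by omega)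
        · rcases Nat.eq_or_lt_of_le h' with h'' | h''
          · -- points `w, b', q 2`
            have hin : i = n := by omega
            obtain ⟨c1, c2⟩ := hqk (by omega)
            rw [hin, hrn, hrq (n + 1) (by omega), hrq (n + 2) (by omega),
              show n + 1 - n = 1 from by omega, show n + 2 - n = 2 from by omega]
            exact Or.inr ⟨hwb', c1, c2⟩
          · -- points `b, w, b'`
            have hin : i + 1 = n := by omega
            rw [hrb i hin, show i + 1 = n from hin, hrn, hrq (i + 2) (by omega),
              show i + 2 - n = 1 from by omega]
            exact Or.inl ⟨hwb, hwb', rfl⟩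
  have hall : ∀ i ≤ n + m, r i ∈ A := by
    refine hA.2.2 r (n + m) hrzig ?_ ?_
    · rw [hrp 0 (by omega), Nat.sub_zero]; exact hpA
    · rw [hrq (n + m) (by omega), Nat.add_sub_cancel_left]; exact hqA
  rcases Nat.lt_or_ge n 2 with h2n | h2n
  · rcases Nat.lt_or_ge m 2 with h2m | h2m
    · -- n = m = 1 : `w ∈ A` violates the gate condition (or `z ∈ A`)
      have hn1 : n = 1 := by omega
      have hwA : w ∈ A := by
        have := hall n (by omega)
        rwa [hrn] at this
      rcases eq_or_lt_of_le hzw with h | h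
      · exact hz (h ▸ hwA)
      · refine hpgate w hwA (Or.inl ⟨?_, ?_⟩)
        · rw [hn1, Nat.sub_self, hp0]; exact h
        · rw [hn1]; exact hwb
    · -- m ≥ 2 : `q (m - 1) ∈ A` contradicts directness of `q`
      have : r (n + m - 1) ∈ A := hall (n + m - 1) (by omega)
      rw [hrq (n + m - 1) (by omega), show n + m - 1 - n = m - 1 from by omega] at this
      exact hqint (m - 1) (by omega) this
  · -- n ≥ 2 : `p (n - 1) ∈ A` contradicts directness of `p`
    have : r 1 ∈ A := hall 1 (by omega)
    rw [hrp 1 (by omega)] at this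
    exact hpint (n - 1) (by omega) this

end Aux

/-- (Lemma 5.2) Let `A` be closed and `z ∉ A`.  The set of all second elements `x 1`
of direct paths `z = x 0, x 1, …, x n` from `z` to `A` is a *flag*, i.e. linearly
ordered by the order of `M`. -/
theorem second_elements_isChain {N : ℕ} {M : Type*}
    [Lattice M] [BoundedOrder M] (P : FreePseudospace N M)
    (A : Set M) (hA : ZClosed A) (z : M) (hz : z ∉ A) :
    IsChain (· ≤ ·)
      {y : M | ∃ (p : ℕ → M) (n : ℕ), p 0 = z ∧ IsDirectPath p n A ∧ p 1 = y} := by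
  rintro y1 ⟨p, n, hp0, hp, hp1⟩ y2 ⟨q, m, hq0, hq, hq1⟩ hne
  have hn : 1 ≤ n := by
    rcases Nat.eq_zero_or_pos n with h | h
    · exfalso; subst h; exact absurd hp.2.2.1 (hp0 ▸ hz)
    · exact h
  have hm : 1 ≤ m := by
    rcases Nat.eq_zero_or_pos m with h | h
    · exfalso; subst h; exact absurd hq.2.2.1 (hq0 ▸ hz)
    · exact h
  have hc1 : z < p 1 ∨ p 1 < z := by
    have := hp.1.1 0 hn; rwa [hp0] at this
  have hc2 : z < q 1 ∨ q 1 < z := by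
    have := hq.1.1 0 hm; rwa [hq0] at this
  subst hp1; subst hq1
  rcases hc1 with h1 | h1 <;> rcases hc2 with h2 | h2
  · by_contra hcon
    push_neg at hcon
    exact core_above A hA hz hp0 hp hq0 hq h1 h2 hcon.1 hcon.2
  · exact Or.inr (h2.trans h1).le
  · exact Or.inl (h1.trans h2).le
  · by_contra hcon
    push_neg at hcon
    exact core_above (M := Mᵒᵈ) A (zClosed_dual hA) hz hp0
      ((isDirectPath_dual p n A).mpr hp) hq0 ((isDirectPath_dual q m A).mpr hq)
      h1 h2 hcon.2 hcon.1
end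

section
/- Let M be a free N-pseudospace, A a closed subset and x ∈ M. Then the gate gate(x/A) of the single element x over A is a flag, i.e. linearly ordered by the order of M; consequently gate(x/A) has at most N+3 elements. -/
/-- The *gate* of `X` over the closed set `A`: the set of all endpoints of direct
paths from elements of `X` to `A`. -/
def gate {M : Type*} [Lattice M] [BoundedOrder M] (X A : Set M) : Set M :=
  {y | ∃ (p : ℕ → M) (n : ℕ), p 0 ∈ X ∧ IsDirectPath p n A ∧ p n = y}

namespace GateAux

variable {M : Type*} [Lattice M]

def Btw (a u v : M) : Prop := (u < a ∧ a < v) ∨ (v < a ∧ a < u)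

def Mid (w : ℕ → M) (i : ℕ) : Prop :=
  (w i < w (i - 1) ∧ w i < w (i + 1) ∧ w i = w (i - 1) ⊓ w (i + 1)) ∨
  (w (i - 1) < w i ∧ w (i + 1) < w i ∧ w i = w (i - 1) ⊔ w (i + 1))

def Cl (A : Set M) : Prop :=
  ∀ (x : ℕ → M) (n : ℕ), IsZigzag x n → x 0 ∈ A → x n ∈ A → ∀ i ≤ n, x i ∈ A

lemma isZigzag_of {w : ℕ → M} {n : ℕ}
    (hc : ∀ i < n, w i < w (i + 1) ∨ w (i + 1) < w i)
    (hm : ∀ i, 0 < i → i < n → Mid w i) : IsZigzag w n := by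
  refine ⟨hc, fun i hi => ?_⟩
  have h := hm (i + 1) (by omega) (by omega)
  simpa [Mid, Nat.add_sub_cancel] using h

lemma sq_inf {v b b' c : M} (h : v = b ⊓ c) (h1 : v ≤ b') (h2 : b' ≤ b) :
    v = b' ⊓ c := by
  refine le_antisymm (le_inf h1 (h ▸ inf_le_right)) ?_
  calc b' ⊓ c ≤ b ⊓ c := inf_le_inf_right c h2
    _ = v := h.symm

lemma sq_sup {v b b' c : M} (h : v = b ⊔ c) (h1 : b' ≤ v) (h2 : b ≤ b') :
    v = b' ⊔ c := by
  refine le_antisymm ?_ (sup_le h1 (h ▸ le_sup_right))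
  calc v = b ⊔ c := h
    _ ≤ b' ⊔ c := sup_le_sup_right h2 c

lemma mid_congr {w w' : ℕ → M} {i j : ℕ} (h : Mid w j)
    (e1 : w' (i - 1) = w (j - 1)) (e2 : w' i = w j) (e3 : w' (i + 1) = w (j + 1)) :
    Mid w' i := by
  unfold Mid at h ⊢
  rw [e1, e2, e3]; exact h

lemma mid_congr' {w w' : ℕ → M} {i j : ℕ} (h : Mid w j)
    (e1 : w' (i - 1) = w (j + 1)) (e2 : w' i = w j) (e3 : w' (i + 1) = w (j - 1)) :
    Mid w' i := by
  unfold Mid at h ⊢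
  rw [e1, e2, e3]
  rcases h with ⟨g1, g2, g3⟩ | ⟨g1, g2, g3⟩
  · exact Or.inl ⟨g2, g1, by rw [inf_comm]; exact g3⟩
  · exact Or.inr ⟨g2, g1, by rw [sup_comm]; exact g3⟩

/-- If vertex `s+1` is genuine and the edge from `s` goes up, then `s+1` is a peak. -/
lemma peak_right {w : ℕ → M} {s : ℕ} (h : Mid w (s + 1)) (h2 : w s < w (s + 1)) :
    w (s + 2) < w (s + 1) ∧ w (s + 1) = w s ⊔ w (s + 2) := by
  unfold Mid at h
  simp only [Nat.add_sub_cancel] at h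
  rcases h with ⟨g1, _, _⟩ | ⟨_, g2, g3⟩
  · exact absurd h2 (asymm g1)
  · exact ⟨by simpa using g2, by simpa using g3⟩

/-- If vertex `s-1` is genuine (`2 ≤ s`) and the edge from `s` goes up, `s-1` is a peak. -/
lemma peak_left {w : ℕ → M} {s : ℕ} (hs : 1 ≤ s) (h : Mid w (s - 1)) (h2 : w s < w (s - 1)) :
    w (s - 2) < w (s - 1) ∧ w (s - 1) = w (s - 2) ⊔ w s := by
  have e : s - 1 + 1 = s := by omega
  have e2 : s - 1 - 1 = s - 2 := by omega
  unfold Mid at h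
  rw [e, e2] at h
  rcases h with ⟨_, g1, _⟩ | ⟨g2, _, g3⟩
  · exact absurd h2 (asymm g1)
  · exact ⟨g2, g3⟩

/-- Contradiction from the zigzag `v, w (s+1), …, w L` when `v ∈ A`. -/
lemma zigR {A : Set M} (hcl : Cl A) {w : ℕ → M} {L s : ℕ} {v : M}
    (hsL : s + 1 < L)
    (hvA : v ∈ A) (hLA : w L ∈ A)
    (hNA : ∀ i, 0 < i → i < L → w i ∉ A)
    (hcomp : ∀ i, i < L → w i < w (i + 1) ∨ w (i + 1) < w i)
    (hmax : ∀ i, s < i → i < L → Mid w i)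
    (hv2 : w s < w (s + 1))
    (hlo : w s ≤ v) (hhi : v ≤ w (s + 1)) : False := by
  set u : ℕ → M := fun j => if j = 0 then v else w (s + j) with hu
  have hA1 : w (s + 1) ∉ A := hNA _ (by omega) (by omega)
  have hvlt : v < w (s + 1) := lt_of_le_of_ne hhi (fun e => hA1 (e ▸ hvA))
  have hu0 : u 0 = v := rfl
  have huj : ∀ j, 0 < j → u j = w (s + j) := by
    intro j hj; simp only [hu]; rw [if_neg (by omega)]
  have hcomp' : ∀ j < L - s, u j < u (j + 1) ∨ u (j + 1) < u j := by
    intro j hj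
    rcases Nat.eq_zero_or_pos j with rfl | hj0
    · rw [hu0, huj 1 one_pos]
      exact Or.inl (by simpa using hvlt)
    · rw [huj j hj0, huj (j + 1) (by omega)]
      have := hcomp (s + j) (by omega)
      rw [show s + (j + 1) = s + j + 1 from by omega]
      exact this
  have hmid' : ∀ j, 0 < j → j < L - s → Mid u j := by
    intro j hj hjL
    rcases Nat.eq_or_lt_of_le hj with e | hj2
    · -- j = 1
      have e1 : j = 1 := by omega
      subst e1
      rcases peak_right (hmax (s + 1) (by omega) (by omega)) hv2 with ⟨p1, p2⟩
      have u0 : u 0 = v := rfl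
      have u1 : u 1 = w (s + 1) := huj 1 one_pos
      have u2 : u 2 = w (s + 2) := huj 2 (by omega)
      refine Or.inr ?_
      simp only [show (1 : ℕ) - 1 = 0 from rfl, show (1 : ℕ) + 1 = 2 from rfl,
        u0, u1, u2]
      exact ⟨hvlt, p1, sq_sup p2 hvlt.le hlo⟩
    · refine mid_congr (w := w) (j := s + j) (hmax (s + j) (by omega) (by omega))
        ?_ ?_ ?_
      · rw [huj (j - 1) (by omega), show s + (j - 1) = s + j - 1 from by omega]
      · exact huj j hj
      · rw [huj (j + 1) (by omega), show s + (j + 1) = s + j + 1 from by omega]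
  have hzig : IsZigzag u (L - s) := isZigzag_of hcomp' hmid'
  have hend : u (L - s) ∈ A := by
    rw [huj _ (by omega), show s + (L - s) = L from by omega]; exact hLA
  have := hcl u (L - s) hzig (by rw [hu0]; exact hvA) hend 1 (by omega)
  rw [huj 1 one_pos] at this
  exact hA1 this

/-- delete the vertex at position `s`. -/
def delA (s : ℕ) (w : ℕ → M) : ℕ → M := fun i => if i < s then w i else w (i + 1)

lemma delA_lt {s i : ℕ} {w : ℕ → M} (h : i < s) : delA s w i = w i := if_pos h

lemma delA_ge {s i : ℕ} {w : ℕ → M} (h : s ≤ i) : delA s w i = w (i + 1) :=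
  if_neg (by omega)

/-- delete the vertices at positions `s`, `s+1`. -/
def delA2 (s : ℕ) (w : ℕ → M) : ℕ → M := fun i => if i < s then w i else w (i + 2)

lemma delA2_lt {s i : ℕ} {w : ℕ → M} (h : i < s) : delA2 s w i = w i := if_pos h

lemma delA2_ge {s i : ℕ} {w : ℕ → M} (h : s ≤ i) : delA2 s w i = w (i + 2) :=
  if_neg (by omega)

def rev (L : ℕ) (w : ℕ → M) : ℕ → M := fun i => w (L - i)

lemma rev_eq {L i : ℕ} {w : ℕ → M} : rev L w i = w (L - i) := rfl

universe u

/-- The grand induction statement, at measure `k`. -/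
def GS (k : ℕ) : Prop :=
  ∀ {M : Type u} [inst : Lattice M] (A : Set M),
    Cl A →
    ∀ (L t ν : ℕ) (cL : Bool) (w : ℕ → M),
      k = 3 * L + (if cL then ν else 0) →
      1 ≤ L → 1 ≤ t → 1 ≤ ν → ν ≤ 2 →
      (cL = false → t = 1 ∧ ν = 1) →
      w 0 ∈ A → w L ∈ A →
      ¬ w 0 ≤ w L → ¬ w L ≤ w 0 →
      (∀ i, 0 < i → i < L → w i ∉ A) →
      (∀ i, i < L → w i < w (i + 1) ∨ w (i + 1) < w i) →
      (∀ i, 0 < i → i < L → (i < t ∨ t + ν ≤ i) → Mid w i) →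
      (cL = true → ∀ a ∈ A, ¬ Btw a (w 1) (w 0)) →
      (∀ a ∈ A, ¬ Btw a (w (L - 1)) (w L)) →
      False

/-- Common tail: the last interior vertex `L-1` is deleted; the new final edge is
`w (L-2) > w L`; the walk is reversed and handled with the left-interval lost. -/
lemma tailCall (k : ℕ) (IH : ∀ k', k' < k → GS.{u} k')
    {M : Type u} [Lattice M] (A : Set M) (hcl : Cl A)
    (L : ℕ) (w : ℕ → M)
    (hk : 3 * L ≤ k)
    (hL3 : 3 ≤ L)
    (h0 : w 0 ∈ A) (hLA : w L ∈ A)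
    (h01 : ¬ w 0 ≤ w L) (h10 : ¬ w L ≤ w 0)
    (hNA : ∀ i, 0 < i → i < L → w i ∉ A)
    (hcomp : ∀ i, i < L → w i < w (i + 1) ∨ w (i + 1) < w i)
    (hleft : ∀ i, 0 < i → i + 1 < L - 1 → Mid w i)
    (hcL : ∀ a ∈ A, ¬ Btw a (w 1) (w 0))
    (hedge : w L < w (L - 2)) : False := by
  set w' : ℕ → M := delA (L - 1) w with hw'
  set v : ℕ → M := rev (L - 1) w' with hv
  have ew' : ∀ i, i < L - 1 → w' i = w i := fun i hi => delA_lt hi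
  have ew'top : w' (L - 1) = w L := by
    rw [hw', delA_ge (le_refl _), show L - 1 + 1 = L from by omega]
  have ev : ∀ i, i ≤ L - 1 → v i = w' (L - 1 - i) := fun i _ => rfl
  have evlt : ∀ i, 0 < i → i ≤ L - 1 → v i = w (L - 1 - i) := by
    intro i hi hi2
    rw [ev i hi2, ew' _ (by omega)]
  have hcomp' : ∀ i, i < L - 1 → v i < v (i + 1) ∨ v (i + 1) < v i := by
    intro i hi
    rcases Nat.eq_zero_or_pos i with rfl | hi0
    · -- edge (v 0, v 1) = (w L, w (L-2))
      rw [ev 0 (by omega), show L - 1 - 0 = L - 1 from rfl, ew'top,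
        evlt 1 one_pos (by omega)]
      exact Or.inl (by rw [show L - 1 - 1 = L - 2 from by omega]; exact hedge)
    · rw [evlt i hi0 (by omega), evlt (i + 1) (by omega) (by omega)]
      have h := hcomp (L - 1 - (i + 1)) (by omega)
      rw [show L - 1 - (i + 1) + 1 = L - 1 - i from by omega] at h
      exact h.symm
  have hmid' : ∀ i, 0 < i → i < L - 1 → (i < 1 ∨ 1 + 1 ≤ i) → Mid v i := by
    intro i hi hiL hcase
    have hi2 : 2 ≤ i := by omega
    refine mid_congr' (w := w) (j := L - 1 - i)
      (hleft (L - 1 - i) (by omega) (by omega)) ?_ ?_ ?_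
    · rw [evlt (i - 1) (by omega) (by omega),
        show L - 1 - (i - 1) = L - 1 - i + 1 from by omega]
    · rw [evlt i hi (by omega)]
    · rw [evlt (i + 1) (by omega) (by omega),
        show L - 1 - (i + 1) = L - 1 - i - 1 from by omega]
  refine IH (3 * (L - 1)) (by omega) A hcl (L - 1) 1 1 false v
    (by simp) (by omega) le_rfl le_rfl (by omega)
    (fun _ => ⟨rfl, rfl⟩) ?_ ?_ ?_ ?_ ?_ hcomp' hmid' (by simp) ?_
  · rw [ev 0 (by omega), show L - 1 - 0 = L - 1 from rfl, ew'top]; exact hLA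
  · rw [evlt (L - 1) (by omega) le_rfl, show L - 1 - (L - 1) = 0 from by omega]
    exact h0
  · rw [ev 0 (by omega), show L - 1 - 0 = L - 1 from rfl, ew'top,
      evlt (L - 1) (by omega) le_rfl, show L - 1 - (L - 1) = 0 from by omega]
    exact h10
  · rw [ev 0 (by omega), show L - 1 - 0 = L - 1 from rfl, ew'top,
      evlt (L - 1) (by omega) le_rfl, show L - 1 - (L - 1) = 0 from by omega]
    exact h01
  · intro i hi hiL
    rw [evlt i hi (by omega)]
    exact hNA _ (by omega) (by omega)
  · -- right interval of v = left interval of w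
    intro a ha hb
    refine hcL a ha ?_
    rw [show L - 1 - 1 = L - 2 from by omega] at hb
    rw [evlt (L - 2) (by omega) (by omega),
      show L - 1 - (L - 2) = 1 from by omega,
      evlt (L - 1) (by omega) le_rfl, show L - 1 - (L - 1) = 0 from by omega] at hb
    exact hb

lemma scriptM (k : ℕ) (IH : ∀ k', k' < k → GS.{u} k')
    {M : Type u} [Lattice M] (A : Set M) (hcl : Cl A)
    (L t ν : ℕ) (cL : Bool) (w : ℕ → M)
    (hk : k = 3 * L + (if cL then ν else 0))
    (hL : 1 ≤ L) (ht : 1 ≤ t) (hν1 : 1 ≤ ν) (hν2 : ν ≤ 2)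
    (hcLf : cL = false → t = 1 ∧ ν = 1)
    (h0 : w 0 ∈ A) (hLA : w L ∈ A)
    (h01 : ¬ w 0 ≤ w L) (h10 : ¬ w L ≤ w 0)
    (hNA : ∀ i, 0 < i → i < L → w i ∉ A)
    (hcomp : ∀ i, i < L → w i < w (i + 1) ∨ w (i + 1) < w i)
    (hzone : ∀ i, 0 < i → i < L → (i < t ∨ t + ν ≤ i) → Mid w i)
    (hcL : cL = true → ∀ a ∈ A, ¬ Btw a (w 1) (w 0))
    (hcR : ∀ a ∈ A, ¬ Btw a (w (L - 1)) (w L))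
    (s : ℕ) (hs1 : 1 ≤ s) (hsL : s < L)
    (hdef : ¬ Mid w s)
    (hmax : ∀ i, s < i → i < L → Mid w i)
    (hleft : ∀ i, 0 < i → i + 1 < s → Mid w i)
    (hm1 : w (s + 1) < w s) (hm2 : w s < w (s - 1)) : False := by
  have hcLT : 2 ≤ s → cL = true := by
    intro h2
    rcases Bool.eq_false_or_eq_true cL with hc | hc
    · exact hc
    · rcases hcLf hc with ⟨ht1, hν1'⟩
      exact absurd (hzone s (by omega) hsL (by omega)) hdef
  rcases Nat.lt_or_ge s 2 with hs2 | hs2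
  · -- s = 1
    have hs : s = 1 := by omega
    subst hs
    rcases Nat.lt_or_ge L 3 with hL2 | hL3
    · -- L = 2
      have hL2' : L = 2 := by omega
      subst hL2'
      refine h10 (le_of_lt ?_)
      have h' := lt_trans hm1 hm2
      norm_num at h'
      exact h'
    · -- delete vertex 1, lose the left interval
      set w' : ℕ → M := delA 1 w with hw'
      have e_lt : ∀ i : ℕ, i < 1 → w' i = w i := fun i hi => delA_lt hi
      have e_ge : ∀ i : ℕ, 1 ≤ i → w' i = w (i + 1) := fun i hi => delA_ge hi
      refine IH (3 * (L - 1)) (by omega) A hcl (L - 1) 1 1 false w'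
        (by simp) (by omega) le_rfl le_rfl (by omega) (fun _ => ⟨rfl, rfl⟩)
        ?_ ?_ ?_ ?_ ?_ ?_ ?_ (by simp) ?_
      · rw [e_lt 0 one_pos]; exact h0
      · rw [e_ge (L - 1) (by omega), show L - 1 + 1 = L from by omega]; exact hLA
      · rw [e_lt 0 one_pos, e_ge (L - 1) (by omega),
          show L - 1 + 1 = L from by omega]; exact h01
      · rw [e_lt 0 one_pos, e_ge (L - 1) (by omega),
          show L - 1 + 1 = L from by omega]; exact h10
      · intro i hi hiL
        rw [e_ge i hi]; exact hNA _ (by omega) (by omega)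
      · intro i hiL
        rcases Nat.eq_zero_or_pos i with rfl | hi0
        · rw [e_lt 0 one_pos, e_ge 1 le_rfl]
          exact Or.inr (lt_trans hm1 hm2)
        · rw [e_ge i hi0, e_ge (i + 1) (by omega)]
          exact hcomp (i + 1) (by omega)
      · intro i hi hiL hcase
        have hi2 : 2 ≤ i := by omega
        refine mid_congr (w := w) (j := i + 1)
          (hmax (i + 1) (by omega) (by omega)) ?_ ?_ ?_
        · rw [e_ge (i - 1) (by omega)]; congr 1; omega
        · exact e_ge i (by omega)
        · exact e_ge (i + 1) (by omega)
      · intro a ha hb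
        refine hcR a ha ?_
        rw [e_ge (L - 1 - 1) (by omega), show L - 1 - 1 + 1 = L - 1 from by omega,
          e_ge (L - 1) (by omega), show L - 1 + 1 = L from by omega] at hb
        exact hb
  · -- 2 ≤ s
    have hcl2 : cL = true := hcLT hs2
    rcases Nat.lt_or_ge s (L - 1) with hsL2 | hsge
    · -- 2 ≤ s ≤ L - 2 : delete s, zone {s-1, s}
      set w' : ℕ → M := delA s w with hw'
      have e_lt : ∀ i : ℕ, i < s → w' i = w i := fun i hi => delA_lt hi
      have e_ge : ∀ i : ℕ, s ≤ i → w' i = w (i + 1) := fun i hi => delA_ge hi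
      refine IH (3 * (L - 1) + 2) (by omega) A hcl (L - 1) (s - 1) 2 true w'
        (by simp) (by omega) (by omega) (by omega) (by omega) (by simp)
        ?_ ?_ ?_ ?_ ?_ ?_ ?_ ?_ ?_
      · rw [e_lt 0 (by omega)]; exact h0
      · rw [e_ge (L - 1) (by omega), show L - 1 + 1 = L from by omega]; exact hLA
      · rw [e_lt 0 (by omega), e_ge (L - 1) (by omega),
          show L - 1 + 1 = L from by omega]; exact h01
      · rw [e_lt 0 (by omega), e_ge (L - 1) (by omega),
          show L - 1 + 1 = L from by omega]; exact h10
      · intro i hi hiL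
        rcases Nat.lt_or_ge i s with h | h
        · rw [e_lt i h]; exact hNA _ hi (by omega)
        · rw [e_ge i h]; exact hNA _ (by omega) (by omega)
      · intro i hiL
        rcases Nat.lt_or_ge (i + 1) s with h | h
        · rw [e_lt i (by omega), e_lt (i + 1) h]; exact hcomp i (by omega)
        · rcases Nat.eq_or_lt_of_le h with h' | h'
          · rw [e_lt i (by omega), e_ge (i + 1) (by omega),
              show i = s - 1 from by omega, show s - 1 + 1 + 1 = s + 1 from by omega]
            exact Or.inr (lt_trans hm1 hm2)
          · rw [e_ge i (by omega), e_ge (i + 1) (by omega)]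
            exact hcomp (i + 1) (by omega)
      · intro i hi hiL hcase
        rcases hcase with h | h
        · -- i < s - 1
          refine mid_congr (w := w) (j := i) (hleft i hi (by omega)) ?_ ?_ ?_
          · exact e_lt (i - 1) (by omega)
          · exact e_lt i (by omega)
          · exact e_lt (i + 1) (by omega)
        · -- s + 1 ≤ i  (note : s - 1 + 2 = s + 1)
          have hi' : s + 1 ≤ i := by omega
          refine mid_congr (w := w) (j := i + 1)
            (hmax (i + 1) (by omega) (by omega)) ?_ ?_ ?_
          · rw [e_ge (i - 1) (by omega)]; congr 1; omega
          · exact e_ge i (by omega)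
          · exact e_ge (i + 1) (by omega)
      · intro _ a ha hb
        refine hcL hcl2 a ha ?_
        rw [e_lt 1 (by omega), e_lt 0 (by omega)] at hb
        exact hb
      · intro a ha hb
        refine hcR a ha ?_
        rw [e_ge (L - 1 - 1) (by omega), show L - 1 - 1 + 1 = L - 1 from by omega,
          e_ge (L - 1) (by omega), show L - 1 + 1 = L from by omega] at hb
        exact hb
    · -- s = L - 1 : tailCall
      have hsL1 : s = L - 1 := by omega
      have hL3 : 3 ≤ L := by omega
      refine tailCall k IH A hcl L w (by omega) hL3 h0 hLA h01 h10 hNA hcomp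
        ?_ (hcL hcl2) ?_
      · intro i hi hi2
        exact hleft i hi (by omega)
      · rw [show L = s + 1 from by omega, show s + 1 - 2 = s - 1 from by omega]
        exact lt_trans hm1 hm2

lemma sq_inf2 {v b c c' : M} (h : v = b ⊓ c) (h1 : v ≤ c') (h2 : c' ≤ c) :
    v = b ⊓ c' := by
  rw [inf_comm] at h ⊢; exact sq_inf h h1 h2

lemma sq_sup2 {v b c c' : M} (h : v = b ⊔ c) (h1 : c' ≤ v) (h2 : c ≤ c') :
    v = b ⊔ c' := by
  rw [sup_comm] at h ⊢; exact sq_sup h h1 h2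

lemma scriptV (k : ℕ) (IH : ∀ k', k' < k → GS.{u} k')
    {M : Type u} [Lattice M] (A : Set M) (hcl : Cl A)
    (L t ν : ℕ) (cL : Bool) (w : ℕ → M)
    (hk : k = 3 * L + (if cL then ν else 0))
    (hL : 1 ≤ L) (ht : 1 ≤ t) (hν1 : 1 ≤ ν) (hν2 : ν ≤ 2)
    (hcLf : cL = false → t = 1 ∧ ν = 1)
    (h0 : w 0 ∈ A) (hLA : w L ∈ A)
    (h01 : ¬ w 0 ≤ w L) (h10 : ¬ w L ≤ w 0)
    (hNA : ∀ i, 0 < i → i < L → w i ∉ A)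
    (hcomp : ∀ i, i < L → w i < w (i + 1) ∨ w (i + 1) < w i)
    (hzone : ∀ i, 0 < i → i < L → (i < t ∨ t + ν ≤ i) → Mid w i)
    (hcL : cL = true → ∀ a ∈ A, ¬ Btw a (w 1) (w 0))
    (hcR : ∀ a ∈ A, ¬ Btw a (w (L - 1)) (w L))
    (s : ℕ) (hs1 : 1 ≤ s) (hsL : s < L)
    (hdef : ¬ Mid w s)
    (hmax : ∀ i, s < i → i < L → Mid w i)
    (hleft : ∀ i, 0 < i → i + 1 < s → Mid w i)
    (hv1 : w s < w (s - 1)) (hv2 : w s < w (s + 1)) : False := by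
  have hcLT : 2 ≤ s → cL = true := by
    intro h2
    rcases Bool.eq_false_or_eq_true cL with hc | hc
    · exact hc
    · rcases hcLf hc with ⟨ht1, hν1'⟩
      exact absurd (hzone s (by omega) hsL (by omega)) hdef
  set v : M := w (s - 1) ⊓ w (s + 1) with hv
  have hlo : w s ≤ v := le_inf hv1.le hv2.le
  have hwsv : w s < v := by
    rcases lt_or_eq_of_le hlo with h | h
    · exact h
    · exact absurd (Or.inl ⟨hv1, hv2, h⟩) hdef
  by_cases hvA : v ∈ A
  · -- the meet is in A
    rcases Nat.lt_or_ge (s + 1) L with hsL2 | hsge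
    · exact zigR hcl hsL2 hvA hLA hNA hcomp hmax hv2 hlo inf_le_right
    · -- s = L - 1
      have hsl1 : s = L - 1 := by omega
      have hvle : v ≤ w L := by
        rw [hv, show s + 1 = L from by omega] at *
        exact inf_le_right
      by_cases hvz : w L ≤ w (s - 1)
      · -- v = w L ≤ w (L-2)
        rcases Nat.lt_or_ge L 3 with hL2 | hL3
        · exact h10 (by rw [show (0 : ℕ) = s - 1 from by omega]; exact hvz)
        · refine tailCall k IH A hcl L w (by omega) hL3 h0 hLA h01 h10 hNA hcomp
            (fun i hi hi2 => hleft i hi (by omega)) (hcL (hcLT (by omega))) ?_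
          have hne : w L ≠ w (s - 1) := by
            intro e
            exact hNA (s - 1) (by omega) (by omega) (e ▸ hLA)
          rw [show L - 2 = s - 1 from by omega]
          exact lt_of_le_of_ne hvz hne
      · -- v strictly between w (L-1) and w L : contra with hcR
        have hvltL : v < w L := by
          refine lt_of_le_of_ne hvle (fun e => hvz ?_)
          rw [← e, hv]; exact inf_le_left
        refine hcR v hvA (Or.inl ⟨?_, hvltL⟩)
        rw [← hsl1]; exact hwsv
  · -- the meet is not in A
    by_cases hb1 : w (s - 1) ≤ w (s + 1)
    · by_cases hb2 : w (s + 1) ≤ w (s - 1)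
      · -- w (s-1) = w (s+1) : backtracking, delete s and s+1
        have weq : w (s - 1) = w (s + 1) := le_antisymm hb1 hb2
        have hvw : v = w (s - 1) := by rw [hv, inf_eq_left]; exact hb1
        have hs2 : 2 ≤ s := by
          by_contra h
          have : s = 1 := by omega
          exact hvA (by rw [hvw, this]; exact h0)
        have hsL2 : s + 1 < L := by
          rcases Nat.lt_or_ge (s + 1) L with h | h
          · exact h
          · exfalso
            exact hvA (by rw [hvw, weq, show s + 1 = L from by omega]; exact hLA)
        have hL4 : 4 ≤ L := by omega
        set w' : ℕ → M := delA2 s w with hw'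
        have e_lt : ∀ i : ℕ, i < s → w' i = w i := fun i hi => delA2_lt hi
        have e_ge : ∀ i : ℕ, s ≤ i → w' i = w (i + 2) := fun i hi => delA2_ge hi
        refine IH (3 * (L - 2) + 1) (by omega) A hcl (L - 2) (s - 1) 1 true w'
          (by simp) (by omega) (by omega) le_rfl (by omega) (by simp)
          ?_ ?_ ?_ ?_ ?_ ?_ ?_ ?_ ?_
        · rw [e_lt 0 (by omega)]; exact h0
        · rw [e_ge (L - 2) (by omega), show L - 2 + 2 = L from by omega]; exact hLA
        · rw [e_lt 0 (by omega), e_ge (L - 2) (by omega),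
            show L - 2 + 2 = L from by omega]; exact h01
        · rw [e_lt 0 (by omega), e_ge (L - 2) (by omega),
            show L - 2 + 2 = L from by omega]; exact h10
        · intro i hi hiL
          rcases Nat.lt_or_ge i s with h | h
          · rw [e_lt i h]; exact hNA _ hi (by omega)
          · rw [e_ge i h]; exact hNA _ (by omega) (by omega)
        · intro i hiL
          rcases Nat.lt_or_ge (i + 1) s with h | h
          · rw [e_lt i (by omega), e_lt (i + 1) h]; exact hcomp i (by omega)
          · rcases Nat.eq_or_lt_of_le h with h' | h'
            · rw [e_lt i (by omega), e_ge (i + 1) (by omega),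
                show i = s - 1 from by omega, weq,
                show s - 1 + 1 + 2 = s + 2 from by omega]
              exact hcomp (s + 1) (by omega)
            · rw [e_ge i (by omega), e_ge (i + 1) (by omega)]
              exact hcomp (i + 2) (by omega)
        · intro i hi hiL hcase
          have hcase' : i < s - 1 ∨ s ≤ i := by omega
          rcases hcase' with h | h
          · refine mid_congr (w := w) (j := i) (hleft i hi (by omega)) ?_ ?_ ?_
            · exact e_lt (i - 1) (by omega)
            · exact e_lt i (by omega)
            · exact e_lt (i + 1) (by omega)
          · rcases Nat.eq_or_lt_of_le h with h' | h'
            · -- i = s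
              subst h'
              refine mid_congr (w := w) (j := s + 2)
                (hmax (s + 2) (by omega) (by omega)) ?_ ?_ ?_
              · rw [e_lt (s - 1) (by omega), weq, show s + 2 - 1 = s + 1 from by omega]
              · exact e_ge s le_rfl
              · rw [e_ge (s + 1) (by omega), show s + 1 + 2 = s + 2 + 1 from by omega]
            · refine mid_congr (w := w) (j := i + 2)
                (hmax (i + 2) (by omega) (by omega)) ?_ ?_ ?_
              · rw [e_ge (i - 1) (by omega), show i - 1 + 2 = i + 2 - 1 from by omega]
              · exact e_ge i (by omega)
              · rw [e_ge (i + 1) (by omega), show i + 1 + 2 = i + 2 + 1 from by omega]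
        · intro _ a ha hb
          refine hcL (hcLT hs2) a ha ?_
          rw [e_lt 1 (by omega), e_lt 0 (by omega)] at hb
          exact hb
        · intro a ha hb
          refine hcR a ha ?_
          have e2 : w' (L - 2) = w L := by
            rw [e_ge (L - 2) (by omega), show L - 2 + 2 = L from by omega]
          rcases Nat.lt_or_ge (L - 2 - 1) s with h | h
          · -- L = s + 2, position L-3 = s-1, value w (s-1) = w (s+1) = w (L-1)
            rw [e2, e_lt (L - 2 - 1) h, show L - 2 - 1 = s - 1 from by omega, weq,
              show s + 1 = L - 1 from by omega] at hb
            exact hb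
          · rw [e2, e_ge (L - 2 - 1) h, show L - 2 - 1 + 2 = L - 1 from by omega] at hb
            exact hb
      · -- v = w (s - 1) < w (s + 1) : delete s
        have hvw : v = w (s - 1) := by rw [hv, inf_eq_left]; exact hb1
        have hlt : w (s - 1) < w (s + 1) := lt_of_le_of_ne hb1 (fun e => hb2 e.ge)
        have hs2 : 2 ≤ s := by
          by_contra h
          have : s = 1 := by omega
          exact hvA (by rw [hvw, this]; exact h0)
        set w' : ℕ → M := delA s w with hw'
        have e_lt : ∀ i : ℕ, i < s → w' i = w i := fun i hi => delA_lt hi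
        have e_ge : ∀ i : ℕ, s ≤ i → w' i = w (i + 1) := fun i hi => delA_ge hi
        rcases Nat.lt_or_ge (s + 1) L with hsL2 | hsge
        · -- s + 1 < L : position s is auto-genuine after deletion
          rcases peak_right (hmax (s + 1) (by omega) (by omega)) hv2 with ⟨p1, p2⟩
          refine IH (3 * (L - 1) + 1) (by omega) A hcl (L - 1) (s - 1) 1 true w'
            (by simp) (by omega) (by omega) le_rfl (by omega) (by simp)
            ?_ ?_ ?_ ?_ ?_ ?_ ?_ ?_ ?_
          · rw [e_lt 0 (by omega)]; exact h0
          · rw [e_ge (L - 1) (by omega), show L - 1 + 1 = L from by omega]; exact hLA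
          · rw [e_lt 0 (by omega), e_ge (L - 1) (by omega),
              show L - 1 + 1 = L from by omega]; exact h01
          · rw [e_lt 0 (by omega), e_ge (L - 1) (by omega),
              show L - 1 + 1 = L from by omega]; exact h10
          · intro i hi hiL
            rcases Nat.lt_or_ge i s with h | h
            · rw [e_lt i h]; exact hNA _ hi (by omega)
            · rw [e_ge i h]; exact hNA _ (by omega) (by omega)
          · intro i hiL
            rcases Nat.lt_or_ge (i + 1) s with h | h
            · rw [e_lt i (by omega), e_lt (i + 1) h]; exact hcomp i (by omega)
            · rcases Nat.eq_or_lt_of_le h with h' | h'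
              · rw [e_lt i (by omega), e_ge (i + 1) (by omega),
                  show i = s - 1 from by omega, show s - 1 + 1 + 1 = s + 1 from by omega]
                exact Or.inl hlt
              · rw [e_ge i (by omega), e_ge (i + 1) (by omega)]
                exact hcomp (i + 1) (by omega)
          · intro i hi hiL hcase
            have hcase' : i < s - 1 ∨ s ≤ i := by omega
            rcases hcase' with h | h
            · refine mid_congr (w := w) (j := i) (hleft i hi (by omega)) ?_ ?_ ?_
              · exact e_lt (i - 1) (by omega)
              · exact e_lt i (by omega)
              · exact e_lt (i + 1) (by omega)
            · rcases Nat.eq_or_lt_of_le h with h' | h'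
              · -- i = s : auto-genuine peak
                subst h'
                refine Or.inr ?_
                rw [e_ge s le_rfl, e_lt (s - 1) (by omega), e_ge (s + 1) (by omega)]
                rw [show s + 1 + 1 = s + 2 from rfl]
                exact ⟨hlt, p1, sq_sup p2 hb1 hv1.le⟩
              · refine mid_congr (w := w) (j := i + 1)
                  (hmax (i + 1) (by omega) (by omega)) ?_ ?_ ?_
                · rw [e_ge (i - 1) (by omega)]; congr 1; omega
                · exact e_ge i (by omega)
                · exact e_ge (i + 1) (by omega)
          · intro _ a ha hb
            refine hcL (hcLT hs2) a ha ?_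
            rw [e_lt 1 (by omega), e_lt 0 (by omega)] at hb
            exact hb
          · intro a ha hb
            refine hcR a ha ?_
            rw [e_ge (L - 1 - 1) (by omega), show L - 1 - 1 + 1 = L - 1 from by omega,
              e_ge (L - 1) (by omega), show L - 1 + 1 = L from by omega] at hb
            exact hb
        · -- s = L - 1 : delete the last interior vertex, right interval shrinks
          have hsl1 : s = L - 1 := by omega
          refine IH (3 * (L - 1) + 1) (by omega) A hcl (L - 1) (s - 1) 1 true w'
            (by simp) (by omega) (by omega) le_rfl (by omega) (by simp)
            ?_ ?_ ?_ ?_ ?_ ?_ ?_ ?_ ?_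
          · rw [e_lt 0 (by omega)]; exact h0
          · rw [e_ge (L - 1) (by omega), show L - 1 + 1 = L from by omega]; exact hLA
          · rw [e_lt 0 (by omega), e_ge (L - 1) (by omega),
              show L - 1 + 1 = L from by omega]; exact h01
          · rw [e_lt 0 (by omega), e_ge (L - 1) (by omega),
              show L - 1 + 1 = L from by omega]; exact h10
          · intro i hi hiL
            rw [e_lt i (by omega)]; exact hNA _ hi (by omega)
          · intro i hiL
            rcases Nat.lt_or_ge (i + 1) s with h | h
            · rw [e_lt i (by omega), e_lt (i + 1) h]; exact hcomp i (by omega)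
            · have h' : i + 1 = s := by omega
              rw [e_lt i (by omega), e_ge (i + 1) (by omega),
                show i = s - 1 from by omega, show s - 1 + 1 + 1 = s + 1 from by omega]
              exact Or.inl hlt
          · intro i hi hiL hcase
            have h : i < s - 1 := by omega
            refine mid_congr (w := w) (j := i) (hleft i hi (by omega)) ?_ ?_ ?_
            · exact e_lt (i - 1) (by omega)
            · exact e_lt i (by omega)
            · exact e_lt (i + 1) (by omega)
          · intro _ a ha hb
            refine hcL (hcLT hs2) a ha ?_
            rw [e_lt 1 (by omega), e_lt 0 (by omega)] at hb
            exact hb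
          · intro a ha hb
            rw [e_lt (L - 1 - 1) (by omega), e_ge (L - 1) (by omega),
              show L - 1 + 1 = L from by omega,
              show L - 1 - 1 = s - 1 from by omega] at hb
            rcases hb with ⟨hb1', hb2'⟩ | ⟨hb1', hb2'⟩
            · -- w (s-1) < a < w L : then also w (L-1) < a
              refine hcR a ha (Or.inl ⟨?_, hb2'⟩)
              rw [← hsl1]
              exact lt_trans hv1 hb1'
            · -- w L < a < w (s-1) : impossible since w (s-1) < w (s+1) = w L
              have : w (s - 1) < w L := by
                rw [← show s + 1 = L from by omega]; exact hlt
              exact absurd (lt_trans hb2' this) (asymm hb1')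
    · by_cases hb2 : w (s + 1) ≤ w (s - 1)
      · -- v = w (s + 1) < w (s - 1) : delete s, new zone {s-1, s}
        have hvw : v = w (s + 1) := by rw [hv, inf_eq_right]; exact hb2
        have hlt : w (s + 1) < w (s - 1) := lt_of_le_of_ne hb2 (fun e => hb1 e.ge)
        have hsL2 : s + 1 < L := by
          rcases Nat.lt_or_ge (s + 1) L with h | h
          · exact h
          · exact absurd (by rw [hvw, show s + 1 = L from by omega]; exact hLA) hvA
        set w' : ℕ → M := delA s w with hw'
        have e_lt : ∀ i : ℕ, i < s → w' i = w i := fun i hi => delA_lt hi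
        have e_ge : ∀ i : ℕ, s ≤ i → w' i = w (i + 1) := fun i hi => delA_ge hi
        have trans_comp : ∀ i, i < L - 1 → w' i < w' (i + 1) ∨ w' (i + 1) < w' i := by
          intro i hiL
          rcases Nat.lt_or_ge (i + 1) s with h | h
          · rw [e_lt i (by omega), e_lt (i + 1) h]; exact hcomp i (by omega)
          · rcases Nat.eq_or_lt_of_le h with h' | h'
            · rw [e_lt i (by omega), e_ge (i + 1) (by omega),
                show i = s - 1 from by omega, show s - 1 + 1 + 1 = s + 1 from by omega]
              exact Or.inr hlt
            · rw [e_ge i (by omega), e_ge (i + 1) (by omega)]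
              exact hcomp (i + 1) (by omega)
        have trans_NA : ∀ i, 0 < i → i < L - 1 → w' i ∉ A := by
          intro i hi hiL
          rcases Nat.lt_or_ge i s with h | h
          · rw [e_lt i h]; exact hNA _ hi (by omega)
          · rw [e_ge i h]; exact hNA _ (by omega) (by omega)
        have trans_hi : ∀ i, s + 1 ≤ i → i < L - 1 → Mid w' i := by
          intro i h hiL
          refine mid_congr (w := w) (j := i + 1)
            (hmax (i + 1) (by omega) (by omega)) ?_ ?_ ?_
          · rw [e_ge (i - 1) (by omega)]; congr 1; omega
          · exact e_ge i (by omega)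
          · exact e_ge (i + 1) (by omega)
        have e_end : w' (L - 1) = w L := by
          rw [e_ge (L - 1) (by omega), show L - 1 + 1 = L from by omega]
        have e_last : w' (L - 1 - 1) = w (L - 1) := by
          rw [e_ge (L - 1 - 1) (by omega), show L - 1 - 1 + 1 = L - 1 from by omega]
        rcases Nat.lt_or_ge s 2 with hs2 | hs2
        · -- s = 1 : new zone {1}, left interval survives
          have hseq : s = 1 := by omega
          refine IH (3 * (L - 1) + (if cL then 1 else 0)) (by
              rcases Bool.eq_false_or_eq_true cL with hc | hc <;> simp [hc] at hk ⊢ <;> omega)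
            A hcl (L - 1) 1 1 cL w' rfl (by omega) le_rfl le_rfl (by omega)
            (fun _ => ⟨rfl, rfl⟩) ?_ ?_ ?_ ?_ trans_NA trans_comp ?_ ?_ ?_
          · rw [e_lt 0 (by omega)]; exact h0
          · rw [e_end]; exact hLA
          · rw [e_lt 0 (by omega), e_end]; exact h01
          · rw [e_lt 0 (by omega), e_end]; exact h10
          · intro i hi hiL hcase
            exact trans_hi i (by omega) hiL
          · intro hc a ha hb
            rw [e_lt 0 (by omega), e_ge 1 (by omega)] at hb
            have hv2' := hv2
            have hb2c := hb2
            rw [hseq] at hv2' hb2c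
            norm_num at hb2c
            rcases hb with ⟨hb1', hb2'⟩ | ⟨hb1', hb2'⟩
            · exact hcL hc a ha (Or.inl ⟨lt_trans hv2' hb1', hb2'⟩)
            · exact absurd (lt_of_lt_of_le hb2' hb2c) (asymm hb1')
          · intro a ha hb
            refine hcR a ha ?_
            rw [e_last, e_end] at hb
            exact hb
        · -- 2 ≤ s : new zone {s-1, s}
          refine IH (3 * (L - 1) + 2) (by
              have := hcLT hs2; simp [this] at hk; omega)
            A hcl (L - 1) (s - 1) 2 true w' (by simp) (by omega) (by omega)
            (by omega) (by omega) (by simp) ?_ ?_ ?_ ?_ trans_NA trans_comp ?_ ?_ ?_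
          · rw [e_lt 0 (by omega)]; exact h0
          · rw [e_end]; exact hLA
          · rw [e_lt 0 (by omega), e_end]; exact h01
          · rw [e_lt 0 (by omega), e_end]; exact h10
          · intro i hi hiL hcase
            rcases hcase with h | h
            · refine mid_congr (w := w) (j := i) (hleft i hi (by omega)) ?_ ?_ ?_
              · exact e_lt (i - 1) (by omega)
              · exact e_lt i (by omega)
              · exact e_lt (i + 1) (by omega)
            · exact trans_hi i (by omega) hiL
          · intro _ a ha hb
            refine hcL (hcLT hs2) a ha ?_
            rw [e_lt 1 (by omega), e_lt 0 (by omega)] at hb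
            exact hb
          · intro a ha hb
            refine hcR a ha ?_
            rw [e_last, e_end] at hb
            exact hb
      · -- strict raise at s
        have hd1 : v < w (s - 1) := by
          rcases lt_or_eq_of_le (inf_le_left : v ≤ w (s - 1)) with h | h
          · exact h
          · exact absurd (by rw [← h]; exact inf_le_right) hb1
        have hd2 : v < w (s + 1) := by
          rcases lt_or_eq_of_le (inf_le_right : v ≤ w (s + 1)) with h | h
          · exact h
          · exact absurd (by rw [← h]; exact inf_le_left) hb2
        set w4 : ℕ → M := Function.update w s v with hw4
        have e_s : w4 s = v := Function.update_self s v w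
        have e_ne : ∀ j, j ≠ s → w4 j = w j := fun j hj =>
          Function.update_of_ne hj v w
        have hcomp4 : ∀ i, i < L → w4 i < w4 (i + 1) ∨ w4 (i + 1) < w4 i := by
          intro i hiL
          rcases Nat.lt_trichotomy (i + 1) s with h | h | h
          · rw [e_ne i (by omega), e_ne (i + 1) (by omega)]; exact hcomp i hiL
          · -- i + 1 = s
            have e1 : w4 i = w i := e_ne i (by omega)
            have e2 : w4 (i + 1) = v := by rw [h]; exact e_s
            rw [e1, e2, show i = s - 1 from by omega]
            exact Or.inr hd1
          · rcases Nat.lt_trichotomy i s with h2 | h2 | h2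
            · omega
            · have e1 : w4 i = v := by rw [h2]; exact e_s
              have e2 : w4 (i + 1) = w (i + 1) := e_ne (i + 1) (by omega)
              rw [e1, e2, show i + 1 = s + 1 from by omega]
              exact Or.inl hd2
            · rw [e_ne i (by omega), e_ne (i + 1) (by omega)]; exact hcomp i hiL
        have hNA4 : ∀ i, 0 < i → i < L → w4 i ∉ A := by
          intro i hi hiL
          rcases Nat.decEq i s with h | h
          · rw [e_ne i h]; exact hNA i hi hiL
          · rw [h, e_s]; exact hvA
        have h04 : w4 0 ∈ A := by rw [e_ne 0 (by omega)]; exact h0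
        have hL4 : w4 L ∈ A := by rw [e_ne L (by omega)]; exact hLA
        have h014 : ¬ w4 0 ≤ w4 L := by
          rw [e_ne 0 (by omega), e_ne L (by omega)]; exact h01
        have h104 : ¬ w4 L ≤ w4 0 := by
          rw [e_ne 0 (by omega), e_ne L (by omega)]; exact h10
        have hmid_s : Mid w4 s := by
          refine Or.inl ?_
          rw [e_s, e_ne (s - 1) (by omega), e_ne (s + 1) (by omega)]
          exact ⟨hd1, hd2, hv⟩
        have hmid_s1 : s + 1 < L → Mid w4 (s + 1) := by
          intro hsL2
          rcases peak_right (hmax (s + 1) (by omega) hsL2) hv2 with ⟨p1, p2⟩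
          refine Or.inr ?_
          rw [show s + 1 - 1 = s from by omega, e_s, e_ne (s + 1) (by omega),
            e_ne (s + 1 + 1) (by omega)]
          exact ⟨hd2, p1, sq_sup p2 hd2.le hlo⟩
        have hmid_sm : 2 ≤ s → Mid w (s - 1) → Mid w4 (s - 1) := by
          intro hs2 hmid
          rcases peak_left hs1 hmid hv1 with ⟨q1, q2⟩
          refine Or.inr ?_
          rw [show s - 1 - 1 = s - 2 from by omega, show s - 1 + 1 = s from by omega,
            e_ne (s - 2) (by omega), e_ne (s - 1) (by omega), e_s]
          exact ⟨q1, hd1, sq_sup2 q2 hd1.le hlo⟩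
        have hmid_far : ∀ i, 0 < i → i < L → (i + 1 < s ∨ s + 1 < i) → Mid w4 i := by
          intro i hi hiL hcase
          have hmid : Mid w i := by
            rcases hcase with h | h
            · exact hleft i hi h
            · exact hmax i (by omega) hiL
          exact mid_congr (w := w) (j := i) hmid (e_ne _ (by omega))
            (e_ne _ (by omega)) (e_ne _ (by omega))
        have hcL4 : cL = true → ∀ a ∈ A, ¬ Btw a (w4 1) (w4 0) := by
          intro hc a ha hb
          rw [e_ne 0 (by omega)] at hb
          rcases Nat.lt_or_ge s 2 with hs2 | hs2
          · -- s = 1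
            have hseq : s = 1 := by omega
            have e1 : w4 1 = v := hseq ▸ e_s
            rw [e1] at hb
            rcases hb with ⟨hb1', hb2'⟩ | ⟨hb1', hb2'⟩
            · refine hcL hc a ha (Or.inl ⟨?_, hb2'⟩)
              have h1v : w 1 < v := hseq ▸ hwsv
              exact lt_trans h1v hb1'
            · have hv0 : v < w 0 := by
                have h' := hd1
                rw [hseq] at h'
                simpa using h'
              exact absurd (lt_trans hb2' hv0) (asymm hb1')
          · rw [e_ne 1 (by omega)] at hb
            exact hcL hc a ha hb
        have hcR4 : ∀ a ∈ A, ¬ Btw a (w4 (L - 1)) (w4 L) := by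
          intro a ha hb
          rw [e_ne L (by omega)] at hb
          rcases Nat.lt_or_ge s (L - 1) with hsl | hsl
          · rw [e_ne (L - 1) (by omega)] at hb
            exact hcR a ha hb
          · -- s = L - 1
            have hseq : s = L - 1 := by omega
            have e1 : w4 (L - 1) = v := hseq ▸ e_s
            rw [e1] at hb
            rcases hb with ⟨hb1', hb2'⟩ | ⟨hb1', hb2'⟩
            · refine hcR a ha (Or.inl ⟨?_, hb2'⟩)
              have h1v : w (L - 1) < v := hseq ▸ hwsv
              exact lt_trans h1v hb1'
            · have hvL : v < w L := by
                have h' := hd2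
                rw [show s + 1 = L from by omega] at h'
                exact h'
              exact absurd (lt_trans hb2' hvL) (asymm hb1')
        by_cases hms : 2 ≤ s ∧ ¬ Mid w (s - 1)
        · -- the neighbour s - 1 may be defective : recurse with zone {s-1}
          have hcl2 : cL = true := hcLT hms.1
          have hνeq : ν = 2 := by
            have nz1 : ¬ (s - 1 < t ∨ t + ν ≤ s - 1) := fun hc =>
              hms.2 (hzone (s - 1) (by omega) (by omega) hc)
            have nz2 : ¬ (s < t ∨ t + ν ≤ s) := fun hc => hdef (hzone s (by omega) hsL hc)
            omega
          refine IH (3 * L + 1) (by rw [hcl2] at hk; simp at hk; omega) A hcl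
            L (s - 1) 1 true w4 rfl hL (by omega) le_rfl (by omega) (by simp)
            h04 hL4 h014 h104 hNA4 hcomp4 ?_ (fun _ => hcL4 hcl2) hcR4
          intro i hi hiL hcase
          rcases Nat.lt_trichotomy i s with h | h | h
          · exact hmid_far i hi hiL (Or.inl (by omega))
          · rw [h]; exact hmid_s
          · rcases Nat.eq_or_lt_of_le (by omega : s + 1 ≤ i) with h3 | h3
            · rw [← h3]; exact hmid_s1 (by omega)
            · exact hmid_far i hi hiL (Or.inr h3)
        · -- everything is genuine after the raise : direct contradiction
          have hall : ∀ i, 0 < i → i < L → Mid w4 i := by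
            intro i hi hiL
            rcases Nat.lt_trichotomy i s with h | h | h
            · rcases Nat.eq_or_lt_of_le (by omega : i ≤ s - 1) with h2 | h2
              · -- i = s - 1, so 2 ≤ s and Mid w (s-1)
                have hs2 : 2 ≤ s := by omega
                have hm : Mid w (s - 1) := by
                  by_contra hcon
                  exact hms ⟨hs2, hcon⟩
                rw [h2]; exact hmid_sm hs2 hm
              · exact hmid_far i hi hiL (Or.inl (by omega))
            · rw [h]; exact hmid_s
            · rcases Nat.eq_or_lt_of_le (by omega : s + 1 ≤ i) with h3 | h3
              · rw [← h3]; exact hmid_s1 (by omega)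
              · exact hmid_far i hi hiL (Or.inr h3)
          have := hcl w4 L (isZigzag_of (fun i hi => hcomp4 i hi) hall) h04 hL4 s hsL.le
          rw [e_s] at this
          exact hvA this

open OrderDual in
lemma mid_dual {w : ℕ → M} {i : ℕ} (h : Mid w i) :
    Mid (M := Mᵒᵈ) (fun j => toDual (w j)) i := by
  rcases h with ⟨h1, h2, h3⟩ | ⟨h1, h2, h3⟩
  · exact Or.inr ⟨toDual_lt_toDual.2 h1, toDual_lt_toDual.2 h2,
      by show toDual (w i) = _; rw [h3, toDual_inf]⟩
  · exact Or.inl ⟨toDual_lt_toDual.2 h1, toDual_lt_toDual.2 h2,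
      by show toDual (w i) = _; rw [h3, toDual_sup]⟩

open OrderDual in
lemma mid_undual {w : ℕ → M} {i : ℕ}
    (h : Mid (M := Mᵒᵈ) (fun j => toDual (w j)) i) : Mid w i := by
  rcases h with ⟨h1, h2, h3⟩ | ⟨h1, h2, h3⟩
  · refine Or.inr ⟨toDual_lt_toDual.1 h1, toDual_lt_toDual.1 h2, ?_⟩
    have h4 : toDual (w i) = toDual (w (i - 1) ⊔ w (i + 1)) := by
      rw [toDual_sup]; exact h3
    exact toDual_inj.1 h4
  · refine Or.inl ⟨toDual_lt_toDual.1 h1, toDual_lt_toDual.1 h2, ?_⟩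
    have h4 : toDual (w i) = toDual (w (i - 1) ⊓ w (i + 1)) := by
      rw [toDual_inf]; exact h3
    exact toDual_inj.1 h4

open OrderDual in
lemma btw_dual {a u v : M} (h : Btw (M := Mᵒᵈ) (toDual a) (toDual u) (toDual v)) :
    Btw a u v := by
  rcases h with ⟨h1, h2⟩ | ⟨h1, h2⟩
  · exact Or.inr ⟨toDual_lt_toDual.1 h2, toDual_lt_toDual.1 h1⟩
  · exact Or.inl ⟨toDual_lt_toDual.1 h2, toDual_lt_toDual.1 h1⟩

open OrderDual in
lemma isZigzag_dual {w : ℕ → M} {n : ℕ}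
    (h : IsZigzag (V := Mᵒᵈ) (fun j => toDual (w j)) n) : IsZigzag w n := by
  constructor
  · intro i hi
    rcases h.1 i hi with h' | h'
    · exact Or.inr (toDual_lt_toDual.1 h')
    · exact Or.inl (toDual_lt_toDual.1 h')
  · intro i hi
    rcases h.2 i hi with ⟨h1, h2, h3⟩ | ⟨h1, h2, h3⟩
    · refine Or.inr ⟨toDual_lt_toDual.1 h1, toDual_lt_toDual.1 h2, ?_⟩
      have h4 : toDual (w (i + 1)) = toDual (w i ⊔ w (i + 2)) := by
        rw [toDual_sup]; exact h3
      exact toDual_inj.1 h4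
    · refine Or.inl ⟨toDual_lt_toDual.1 h1, toDual_lt_toDual.1 h2, ?_⟩
      have h4 : toDual (w (i + 1)) = toDual (w i ⊓ w (i + 2)) := by
        rw [toDual_inf]; exact h3
      exact toDual_inj.1 h4

open OrderDual in
lemma cl_dual {A : Set M} (h : Cl A) : Cl (M := Mᵒᵈ) (ofDual ⁻¹' A) := by
  intro x n hz h0 hn i hi
  have hz' : IsZigzag (fun j => ofDual (x j)) n := isZigzag_dual hz
  exact h _ n hz' h0 hn i hi

lemma gs_all : ∀ k, GS.{u} k := by
  intro k
  induction k using Nat.strong_induction_on with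
  | _ k IH =>
  intro M inst A hcl L t ν cL w hk hL ht hν1 hν2 hcLf h0 hLA h01 h10 hNA hcomp hzone hcL hcR
  rcases Nat.eq_or_lt_of_le hL with hL1 | hL2
  · -- L = 1 : the endpoints are comparable, contradiction
    have e : w 1 = w L := by rw [← hL1]
    rcases hcomp 0 (by omega) with h | h
    · rw [e] at h; exact h01 h.le
    · rw [e] at h; exact h10 h.le
  · by_cases hall : ∀ i, 0 < i → i < L → Mid w i
    · -- the walk is a zigzag : its interior lies in A, contradiction
      exact hNA 1 one_pos (by omega)
        (hcl w L (isZigzag_of hcomp hall) h0 hLA 1 (by omega))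
    · push_neg at hall
      obtain ⟨i0, hi01, hi0L, hi0m⟩ := hall
      classical
      set P : ℕ → Prop := fun i => 0 < i ∧ i < L ∧ ¬ Mid w i with hP
      have hex : P i0 := ⟨hi01, hi0L, hi0m⟩
      set s := Nat.findGreatest P (L - 1) with hs
      have hPs : P s := Nat.findGreatest_spec (m := i0) (by omega) hex
      obtain ⟨hs1, hsL, hdef⟩ := hPs
      have hmax : ∀ i, s < i → i < L → Mid w i := by
        intro i hsi hiL
        by_contra hcon
        exact Nat.findGreatest_is_greatest hsi (by omega) ⟨by omega, hiL, hcon⟩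
      have hts : t ≤ s ∧ s < t + ν := by
        by_contra hcon
        exact hdef (hzone s hs1 hsL (by omega))
      have hleft : ∀ i, 0 < i → i + 1 < s → Mid w i := by
        intro i hi hi2
        exact hzone i hi (by omega) (Or.inl (by omega))
      have hc1 := hcomp (s - 1) (by omega)
      rw [show s - 1 + 1 = s from by omega] at hc1
      have hc2 := hcomp s hsL
      -- dualized data
      have hcl' : Cl (M := Mᵒᵈ) (OrderDual.ofDual ⁻¹' A) := cl_dual hcl
      have h01' : ¬ (fun j => OrderDual.toDual (w j)) 0 ≤ (fun j => OrderDual.toDual (w j)) L :=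
        fun h => h10 (OrderDual.toDual_le_toDual.1 h)
      have h10' : ¬ (fun j => OrderDual.toDual (w j)) L ≤ (fun j => OrderDual.toDual (w j)) 0 :=
        fun h => h01 (OrderDual.toDual_le_toDual.1 h)
      have hcomp' : ∀ i, i < L → (fun j => OrderDual.toDual (w j)) i < (fun j => OrderDual.toDual (w j)) (i + 1) ∨
          (fun j => OrderDual.toDual (w j)) (i + 1) < (fun j => OrderDual.toDual (w j)) i := by
        intro i hi
        rcases hcomp i hi with h | h
        · exact Or.inr (OrderDual.toDual_lt_toDual.2 h)
        · exact Or.inl (OrderDual.toDual_lt_toDual.2 h)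
      have hzone' : ∀ i, 0 < i → i < L → (i < t ∨ t + ν ≤ i) →
          Mid (M := Mᵒᵈ) (fun j => OrderDual.toDual (w j)) i :=
        fun i a b c => mid_dual (hzone i a b c)
      have hcL' : cL = true → ∀ a ∈ (OrderDual.ofDual ⁻¹' A : Set Mᵒᵈ),
          ¬ Btw a ((fun j => OrderDual.toDual (w j)) 1) ((fun j => OrderDual.toDual (w j)) 0) :=
        fun hc a ha hb => hcL hc (OrderDual.ofDual a) ha (btw_dual hb)
      have hcR' : ∀ a ∈ (OrderDual.ofDual ⁻¹' A : Set Mᵒᵈ),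
          ¬ Btw a ((fun j => OrderDual.toDual (w j)) (L - 1)) ((fun j => OrderDual.toDual (w j)) L) :=
        fun a ha hb => hcR (OrderDual.ofDual a) ha (btw_dual hb)
      have hdef' : ¬ Mid (M := Mᵒᵈ) (fun j => OrderDual.toDual (w j)) s :=
        fun h => hdef (mid_undual h)
      have hmax' : ∀ i, s < i → i < L → Mid (M := Mᵒᵈ) (fun j => OrderDual.toDual (w j)) i :=
        fun i a b => mid_dual (hmax i a b)
      have hleft' : ∀ i, 0 < i → i + 1 < s → Mid (M := Mᵒᵈ) (fun j => OrderDual.toDual (w j)) i :=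
        fun i a b => mid_dual (hleft i a b)
      rcases hc1 with hA | hA <;> rcases hc2 with hB | hB
      · -- w (s-1) < w s < w (s+1) : ascending, dualize to scriptM
        exact scriptM k IH (M := Mᵒᵈ) (OrderDual.ofDual ⁻¹' A) hcl' L t ν cL
          (fun j => OrderDual.toDual (w j)) hk hL ht hν1 hν2 hcLf h0 hLA h01' h10'
          hNA hcomp' hzone' hcL' hcR' s hs1 hsL hdef' hmax' hleft'
          (OrderDual.toDual_lt_toDual.2 hB) (OrderDual.toDual_lt_toDual.2 hA)
      · -- peak : dualize to scriptV
        exact scriptV k IH (M := Mᵒᵈ) (OrderDual.ofDual ⁻¹' A) hcl' L t ν cL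
          (fun j => OrderDual.toDual (w j)) hk hL ht hν1 hν2 hcLf h0 hLA h01' h10'
          hNA hcomp' hzone' hcL' hcR' s hs1 hsL hdef' hmax' hleft'
          (OrderDual.toDual_lt_toDual.2 hA) (OrderDual.toDual_lt_toDual.2 hB)
      · -- valley : scriptV directly
        exact scriptV k IH A hcl L t ν cL w hk hL ht hν1 hν2 hcLf h0 hLA h01 h10
          hNA hcomp hzone hcL hcR s hs1 hsL hdef hmax hleft hA hB
      · -- descending : scriptM directly
        exact scriptM k IH A hcl L t ν cL w hk hL ht hν1 hν2 hcLf h0 hLA h01 h10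
          hNA hcomp hzone hcL hcR s hs1 hsL hdef hmax hleft hB hA

lemma mid_of_zig {w : ℕ → M} {n i : ℕ} (h : IsZigzag w n)
    (h1 : 0 < i) (h2 : i < n) : Mid w i := by
  have h' := h.2 (i - 1) (by omega)
  have e1 : i - 1 + 1 = i := by omega
  have e2 : i - 1 + 2 = i + 1 := by omega
  rw [e1, e2] at h'
  exact h'

/-- The main incomparability lemma : two members of `gate {x} A` are comparable. -/
lemma gate_comparable {A : Set M} (hcl : Cl A)
    {x : M} {p q : ℕ → M} {n m : ℕ}
    (hp0x : p 0 = x) (hq0x : q 0 = x)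
    (hpz : IsZigzag p n) (hqz : IsZigzag q m)
    (hpNA : ∀ i < n, p i ∉ A) (hqNA : ∀ i < m, q i ∉ A)
    (hpA : p n ∈ A) (hqA : q m ∈ A)
    (hpd : ∀ a ∈ A, ¬((p (n - 1) < a ∧ a < p n) ∨ (p n < a ∧ a < p (n - 1))))
    (hqd : ∀ a ∈ A, ¬((q (m - 1) < a ∧ a < q m) ∨ (q m < a ∧ a < q (m - 1))))
    (hn : 1 ≤ n) (hm : 1 ≤ m)
    (h01 : ¬ p n ≤ q m) (h10 : ¬ q m ≤ p n) : False := by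
  set W : ℕ → M := fun i => if i ≤ n then p (n - i) else q (i - n) with hW
  have W_le : ∀ i, i ≤ n → W i = p (n - i) := fun i hi => if_pos hi
  have W_ge : ∀ i, n ≤ i → W i = q (i - n) := by
    intro i hi
    rcases Nat.eq_or_lt_of_le hi with h | h
    · rw [← h]
      show (if n ≤ n then p (n - n) else q (n - n)) = q (n - n)
      rw [if_pos le_rfl, Nat.sub_self, hp0x, ← hq0x]
    · exact if_neg (by omega)
  refine gs_all (3 * (n + m) + 1) A hcl (n + m) n 1 true W (by simp) (by omega)
    hn le_rfl (by omega) (by simp) ?_ ?_ ?_ ?_ ?_ ?_ ?_ ?_ ?_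
  · rw [W_le 0 (by omega), Nat.sub_zero]; exact hpA
  · rw [W_ge (n + m) (by omega), Nat.add_sub_cancel_left]; exact hqA
  · rw [W_le 0 (by omega), Nat.sub_zero, W_ge (n + m) (by omega),
      Nat.add_sub_cancel_left]
    exact h01
  · rw [W_le 0 (by omega), Nat.sub_zero, W_ge (n + m) (by omega),
      Nat.add_sub_cancel_left]
    exact h10
  · intro i hi hiL
    rcases Nat.lt_or_ge i n with h | h
    · rw [W_le i (by omega)]
      exact hpNA (n - i) (by omega)
    · rw [W_ge i h]
      exact hqNA (i - n) (by omega)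
  · intro i hi
    rcases Nat.lt_or_ge i n with h | h
    · rw [W_le i (by omega), W_le (i + 1) (by omega)]
      have hc := hpz.1 (n - i - 1) (by omega)
      rw [show n - i - 1 + 1 = n - i from by omega] at hc
      rw [show n - (i + 1) = n - i - 1 from by omega]
      exact hc.symm
    · rw [W_ge i h, W_ge (i + 1) (by omega)]
      have hc := hqz.1 (i - n) (by omega)
      rw [show i + 1 - n = i - n + 1 from by omega]
      exact hc
  · intro i hi hiL hcase
    rcases hcase with h | h
    · refine mid_congr' (w := p) (j := n - i) (mid_of_zig hpz (by omega) (by omega))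
        ?_ ?_ ?_
      · rw [W_le (i - 1) (by omega), show n - (i - 1) = n - i + 1 from by omega]
      · rw [W_le i (by omega)]
      · rw [W_le (i + 1) (by omega), show n - (i + 1) = n - i - 1 from by omega]
    · refine mid_congr (w := q) (j := i - n) (mid_of_zig hqz (by omega) (by omega))
        ?_ ?_ ?_
      · rw [W_ge (i - 1) (by omega), show i - 1 - n = i - n - 1 from by omega]
      · rw [W_ge i (by omega)]
      · rw [W_ge (i + 1) (by omega), show i + 1 - n = i - n + 1 from by omega]
  · intro _ a ha hb
    rw [W_le 1 (by omega), W_le 0 (by omega), Nat.sub_zero] at hb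
    exact hpd a ha hb
  · intro a ha hb
    rw [W_ge (n + m - 1) (by omega), W_ge (n + m) (by omega),
      Nat.add_sub_cancel_left, show n + m - 1 - n = m - 1 from by omega] at hb
    exact hqd a ha hb

end GateAux

/-- (Proposition 5.4 and its corollary) Gates of single elements over closed sets are
flags (linearly ordered subsets); consequently `gate(x/A)` has at most `N + 3`
elements. -/
theorem gate_singleton_isChain_card_le {N : ℕ} {M : Type*}
    [Lattice M] [BoundedOrder M] (P : FreePseudospace N M)
    (A : Set M) (hA : ZClosed A) (x : M) :
    IsChain (· ≤ ·) (gate {x} A) ∧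
    (gate {x} A).Finite ∧ (gate {x} A).ncard ≤ N + 3 := by
  have hcl : GateAux.Cl A := hA.2.2
  have hchain : IsChain (· ≤ ·) (gate {x} A) := by
    intro y hy z hz hne
    by_contra hcon
    push_neg at hcon
    obtain ⟨h01, h10⟩ := hcon
    obtain ⟨p, n, hp0, ⟨hpz, hpNA, hpA, hpd⟩, hpn⟩ := hy
    obtain ⟨q, m, hq0, ⟨hqz, hqNA, hqA, hqd⟩, hqm⟩ := hz
    have hp0x : p 0 = x := hp0
    have hq0x : q 0 = x := hq0
    subst hpn hqm
    rcases Nat.eq_zero_or_pos n with hn0 | hn0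
    · subst hn0
      rcases Nat.eq_zero_or_pos m with hm0 | hm0
      · subst hm0
        exact hne (by rw [hp0x, hq0x])
      · exact hqNA 0 hm0 (by rw [hq0x, ← hp0x]; exact hpA)
    · rcases Nat.eq_zero_or_pos m with hm0 | hm0
      · subst hm0
        exact hpNA 0 hn0 (by rw [hp0x, ← hq0x]; exact hqA)
      · exact GateAux.gate_comparable hcl hp0x hq0x hpz hqz hpNA hqNA hpA hqA
          hpd hqd hn0 hm0 h01 h10
  have hinj : Set.InjOn P.layer (gate {x} A) := by
    intro u hu v hv he
    by_contra hne
    rcases hchain hu hv hne with h | h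
    · exact absurd he (ne_of_lt (P.layer_strictMono u v (lt_of_le_of_ne h hne)))
    · exact absurd he.symm
        (ne_of_lt (P.layer_strictMono v u (lt_of_le_of_ne h (Ne.symm hne))))
  have hsub : P.layer '' (gate {x} A) ⊆ Set.Icc (-1 : ℤ) ((N : ℤ) + 1) := by
    rintro _ ⟨v, _, rfl⟩
    exact ⟨(P.layer_bounds v).1, (P.layer_bounds v).2⟩
  have hfin : (gate {x} A).Finite :=
    Set.Finite.of_finite_image ((Set.finite_Icc _ _).subset hsub) hinj
  refine ⟨hchain, hfin, ?_⟩
  have h1 : (gate {x} A).ncard = (P.layer '' (gate {x} A)).ncard :=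
    (Set.ncard_image_of_injOn hinj).symm
  have h2 := Set.ncard_le_ncard hsub (Set.finite_Icc _ _)
  have h3 : (Set.Icc (-1 : ℤ) ((N : ℤ) + 1)).ncard = N + 3 := by
    rw [← Finset.coe_Icc, Set.ncard_coe_finset, Int.card_Icc]
    omega
  omega
end
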